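/- arXiv:1703.10108 — 12 statements merged into one kernel-verified Lean document; each statement's English description precedes it below -/
import Mathlib

section
/- Let E be a Banach lattice and let A be a bounded linear operator on E which is positive-cone compatible in the following sense of the claim: suppose λ0 < λ1 are real numbers such that every λ in the interval (λ0, λ1] lies in the resolvent set of A (i.e., λI − A is invertible in the algebra of bounded operators on E), and suppose that the resolvent R(λ1, A) = (λ1·I − A)⁻¹ is a positive operator. Then R(λ, A) is a positive operator for every λ ∈ (λ0, λ1]. -/
open Filter

lemma real_smul_nonneg' {E : Type*} [NormedAddCommGroup E] [Lattice E] [IsOrderedAddMonoid E] [HasSolidNorm E] [NormedSpace ℝ E]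
    {c : ℝ} (hc : 0 ≤ c) {x : E} (hx : 0 ≤ x) : 0 ≤ c • x := by
  have semi : ∀ (k : ℕ) (z : E), 0 ≤ (2 ^ k) • z → 0 ≤ z := by
    intro k
    induction k with
    | zero => intro z hz; simpa using hz
    | succ k ih =>
      intro z hz
      have : (2 : ℕ) ^ (k + 1) • z = 2 ^ k • (2 • z) := by
        rw [pow_succ, mul_comm, mul_smul, smul_comm]
      exact nsmul_two_semiclosed (ih _ (by rwa [this] at hz))
  have dyadic : ∀ k : ℕ, 0 ≤ ((⌈c * 2 ^ k⌉₊ : ℝ) / 2 ^ k) • x := by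
    intro k
    apply semi k
    have h2 : ((2:ℕ) ^ k) • (((⌈c * 2 ^ k⌉₊ : ℝ) / 2 ^ k) • x) = (⌈c * 2 ^ k⌉₊ : ℕ) • x := by
      rw [← Nat.cast_smul_eq_nsmul ℝ, ← Nat.cast_smul_eq_nsmul ℝ (⌈c * 2 ^ k⌉₊), smul_smul]
      congr 1
      push_cast
      field_simp
    rw [h2]
    exact nsmul_nonneg hx _
  have hq : ∀ k : ℕ, c ≤ (⌈c * 2 ^ k⌉₊ : ℝ) / 2 ^ k := by
    intro k
    rw [le_div_iff₀ (by positivity)]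
    exact Nat.le_ceil _
  have hq' : ∀ k : ℕ, (⌈c * 2 ^ k⌉₊ : ℝ) / 2 ^ k ≤ c + ((1:ℝ)/2) ^ k := by
    intro k
    rw [div_le_iff₀ (by positivity)]
    have := (Nat.ceil_lt_add_one (by positivity : (0:ℝ) ≤ c * 2 ^ k)).le
    calc (⌈c * 2 ^ k⌉₊ : ℝ) ≤ c * 2 ^ k + 1 := this
      _ = (c + ((1:ℝ)/2) ^ k) * 2 ^ k := by
          rw [add_mul]
          congr 1
          rw [div_pow, one_pow, div_mul_cancel₀]
          positivity
  have tend : Tendsto (fun k : ℕ => (⌈c * 2 ^ k⌉₊ : ℝ) / 2 ^ k) atTop (nhds c) := by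
    have hub : Tendsto (fun k : ℕ => c + ((1:ℝ)/2) ^ k) atTop (nhds (c + 0)) :=
      tendsto_const_nhds.add
        (tendsto_pow_atTop_nhds_zero_of_lt_one (by norm_num) (by norm_num))
    rw [add_zero] at hub
    exact tendsto_of_tendsto_of_tendsto_of_le_of_le tendsto_const_nhds hub hq hq'
  have : Tendsto (fun k : ℕ => ((⌈c * 2 ^ k⌉₊ : ℝ) / 2 ^ k) • x) atTop (nhds (c • x)) :=
    tend.smul_const x
  exact ge_of_tendsto' this dyadic

set_option maxHeartbeats 1000000
set_option synthInstance.maxHeartbeats 200000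

lemma resolvent_step
    {E : Type*} [NormedAddCommGroup E] [Lattice E] [IsOrderedAddMonoid E] [HasSolidNorm E] [NormedSpace ℝ E] [CompleteSpace E]
    (A : E →L[ℝ] E) {μ ν : ℝ} (hμ : μ ∈ resolventSet ℝ A) (hν : ν ∈ resolventSet ℝ A)
    (hle : ν ≤ μ) (hlt : (μ - ν) * ‖resolvent A μ‖ < 1)
    (hpos : ∀ x : E, 0 ≤ x → 0 ≤ resolvent A μ x) :
    ∀ x : E, 0 ≤ x → 0 ≤ resolvent A ν x := by
  set r : E →L[ℝ] E := resolvent A μ with hr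
  set t : E →L[ℝ] E := (μ - ν) • r with htdef
  have ht : ‖t‖ < 1 := by
    calc ‖t‖ ≤ ‖μ - ν‖ * ‖r‖ := ContinuousLinearMap.opNorm_smul_le _ _
      _ = (μ - ν) * ‖r‖ := by
          rw [Real.norm_eq_abs, abs_of_nonneg (by linarith : (0:ℝ) ≤ μ - ν)]
      _ < 1 := hlt
  have hsum : Summable (fun n : ℕ => t ^ n) := summable_geometric_of_norm_lt_one ht
  have hcomm0 : Commute r t := (Commute.refl r).smul_right (μ - ν)
  have hcomm : r * (∑' n : ℕ, t ^ n) = (∑' n : ℕ, t ^ n) * r :=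
    (Commute.tsum_right r fun n => hcomm0.pow_right n).eq
  have h2 : (algebraMap ℝ (E →L[ℝ] E) μ - A) * r = 1 := Ring.mul_inverse_cancel _ hμ
  have h1 : (algebraMap ℝ (E →L[ℝ] E) ν - A)
      = (algebraMap ℝ (E →L[ℝ] E) μ - A) - (μ - ν) • 1 := by
    rw [Algebra.algebraMap_eq_smul_one, Algebra.algebraMap_eq_smul_one, sub_smul]
    abel
  have hgeom : (1 - t) * (∑' n : ℕ, t ^ n) = 1 := mul_neg_geom_series t ht
  have key : (algebraMap ℝ (E →L[ℝ] E) ν - A) * ((∑' n : ℕ, t ^ n) * r) = 1 := by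
    rw [h1, ← hcomm, sub_mul, smul_mul_assoc, one_mul, ← mul_assoc, h2, one_mul]
    rw [sub_mul, one_mul, htdef, smul_mul_assoc] at hgeom
    exact hgeom
  have hRν : resolvent A ν * (algebraMap ℝ (E →L[ℝ] E) ν - A) = 1 :=
    Ring.inverse_mul_cancel _ hν
  have final : resolvent A ν = (∑' n : ℕ, t ^ n) * r := by
    calc resolvent A ν
        = resolvent A ν * ((algebraMap ℝ (E →L[ℝ] E) ν - A) * ((∑' n : ℕ, t ^ n) * r)) := by
          rw [key, mul_one]
      _ = (resolvent A ν * (algebraMap ℝ (E →L[ℝ] E) ν - A)) * ((∑' n : ℕ, t ^ n) * r) := by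
          rw [mul_assoc]
      _ = (∑' n : ℕ, t ^ n) * r := by rw [hRν, one_mul]
  intro x hx
  rw [final]
  have htn : ∀ (n : ℕ) (y : E), 0 ≤ y → 0 ≤ (t ^ n) y := by
    intro n
    induction n with
    | zero => intro y hy; simpa using hy
    | succ n ih =>
      intro y hy
      rw [pow_succ, ContinuousLinearMap.mul_apply]
      have hty : (0:E) ≤ t y := by
        rw [htdef]
        exact real_smul_nonneg' (by linarith : (0:ℝ) ≤ μ - ν) (hpos y hy)
      exact ih _ hty
  have happ : ((∑' n : ℕ, t ^ n) * r) x = ∑' n : ℕ, (t ^ n) (r x) := by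
    rw [ContinuousLinearMap.mul_apply]
    simpa using ((ContinuousLinearMap.apply ℝ E (r x)).map_tsum hsum)
  rw [happ]
  exact tsum_nonneg fun n => htn n _ (hpos x hx)




/-- **Proposition 3.2(a)** (bounded-operator form).
If `A` is a bounded operator on a Banach lattice `E`, every `λ ∈ (λ₀, λ₁]` lies in the
resolvent set of `A`, and the resolvent at `λ₁` is a positive operator, then the resolvent
at every `λ ∈ (λ₀, λ₁]` is a positive operator. -/
theorem resolvent_positive_of_positive_at_right
    {E : Type*} [NormedAddCommGroup E] [Lattice E] [IsOrderedAddMonoid E] [HasSolidNorm E] [NormedSpace ℝ E] [CompleteSpace E]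
    (A : E →L[ℝ] E) (l₀ l₁ : ℝ) (h : l₀ < l₁)
    (hres : ∀ l ∈ Set.Ioc l₀ l₁, l ∈ resolventSet ℝ A)
    (hpos : ∀ x : E, 0 ≤ x → 0 ≤ resolvent A l₁ x) :
    ∀ l ∈ Set.Ioc l₀ l₁, ∀ x : E, 0 ≤ x → 0 ≤ resolvent A l x := by
  intro l hl
  have hsub : Set.Icc l l₁ ⊆ Set.Ioc l₀ l₁ := fun μ hμ => ⟨lt_of_lt_of_le hl.1 hμ.1, hμ.2⟩
  have hcont : ContinuousOn (fun μ : ℝ => resolvent A μ) (Set.Icc l l₁) := fun μ hμ =>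
    (spectrum.hasDerivAt_resolvent (hres μ (hsub hμ))).continuousAt.continuousWithinAt
  obtain ⟨C, hC⟩ := (isCompact_Icc).exists_bound_of_continuousOn hcont
  set D : ℝ := max C 0 + 1 with hD
  have hD0 : 0 < D := by
    have := le_max_right C 0
    rw [hD]; linarith
  set δ : ℝ := (2 * D)⁻¹ with hδ
  have hδ0 : 0 < δ := by rw [hδ]; positivity
  have hbound : ∀ μ ∈ Set.Icc l l₁, ‖resolvent A μ‖ ≤ D := fun μ hμ => by
    have := le_max_left C 0
    have := hC μ hμ
    rw [hD]; linarith
  set g : ℕ → ℝ := fun n => max l (l₁ - n * δ) with hg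
  have hgmem : ∀ n, g n ∈ Set.Icc l l₁ := by
    intro n
    refine ⟨le_max_left _ _, max_le hl.2 ?_⟩
    have : 0 ≤ (n : ℝ) * δ := by positivity
    linarith
  have hmono : ∀ n, g (n + 1) ≤ g n := by
    intro n
    apply max_le (le_max_left _ _)
    refine le_trans ?_ (le_max_right _ _)
    push_cast
    nlinarith [hδ0.le]
  have hstepgap : ∀ n, g n - g (n + 1) ≤ δ := by
    intro n
    have h1 : l ≤ g (n + 1) + δ := by have := (hgmem (n + 1)).1; linarith
    have h2 : l₁ - n * δ ≤ g (n + 1) + δ := by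
      have h3 : l₁ - ((n : ℕ) + 1 : ℕ) * δ ≤ g (n + 1) := le_max_right _ _
      push_cast at h3 ⊢
      linarith
    have : g n ≤ g (n + 1) + δ := max_le h1 h2
    linarith
  have hposg : ∀ n, ∀ x : E, 0 ≤ x → 0 ≤ resolvent A (g n) x := by
    intro n
    induction n with
    | zero =>
      have h0 : g 0 = l₁ := by
        rw [hg]
        simp [max_eq_right hl.2]
      rw [h0]
      exact hpos
    | succ n ih =>
      refine resolvent_step A (hres _ (hsub (hgmem n))) (hres _ (hsub (hgmem (n + 1))))
        (hmono n) ?_ ih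
      have hgap0 : 0 ≤ g n - g (n + 1) := by linarith [hmono n]
      calc (g n - g (n + 1)) * ‖resolvent A (g n)‖ ≤ δ * D :=
            mul_le_mul (hstepgap n) (hbound _ (hgmem n)) (norm_nonneg _) hδ0.le
        _ < 1 := by
            rw [hδ]
            rw [inv_mul_eq_div, div_lt_one (by linarith)]
            linarith
  obtain ⟨n, hn⟩ := exists_nat_ge ((l₁ - l) / δ)
  have hgl : g n = l := by
    apply max_eq_left
    rw [div_le_iff₀ hδ0] at hn
    linarith
  intro x hx
  have := hposg n x hx
  rwa [hgl] at this
end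

section
/- Let E be a nonzero Banach lattice, let u be a quasi-interior point of the positive cone of E, and let A be a bounded linear operator on E. Let λ0 < λ1 be real numbers and M > 0 be such that: (1) every λ ∈ (λ0, λ1) lies in the resolvent set of A and R(λ, A) is strongly positive with respect to u; (2) every real λ ≥ λ1 lies in the resolvent set of A and ‖R(λ, A)‖ ≤ M. Then for every positive bounded operator K on E with ‖K‖ < 1/M the following hold: (i) every real λ ≥ λ1 lies in the resolvent set of A + K; (ii) for every real λ < λ1 such that μ < λ for every real number μ for which μI − (A + K) is not invertible (i.e., λ exceeds the real spectral bound of A + K), λ lies in the resolvent set of A + K and R(λ, A + K) is strongly positive with respect to u. -/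
section Aux

variable {E : Type*} [NormedAddCommGroup E] [Lattice E] [HasSolidNorm E] [IsOrderedAddMonoid E] [NormedSpace ℝ E] [CompleteSpace E]

private lemma factor_aux (B C : E →L[ℝ] E) (l : ℝ)
    (hB : IsUnit (algebraMap ℝ (E →L[ℝ] E) l - B)) :
    algebraMap ℝ (E →L[ℝ] E) l - (B + C) =
      (algebraMap ℝ (E →L[ℝ] E) l - B) * (1 - resolvent B l * C) := by
  have h1 : (algebraMap ℝ (E →L[ℝ] E) l - B) * resolvent B l = 1 :=
    Ring.mul_inverse_cancel _ hB
  rw [mul_sub, mul_one, ← mul_assoc, h1, one_mul, sub_sub]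

private lemma key_aux (B C : E →L[ℝ] E) (l : ℝ)
    (hB : IsUnit (algebraMap ℝ (E →L[ℝ] E) l - B)) (hC : ‖resolvent B l * C‖ < 1) :
    IsUnit (algebraMap ℝ (E →L[ℝ] E) l - (B + C)) ∧
      resolvent (B + C) l = ∑' n : ℕ, (resolvent B l * C) ^ n * resolvent B l := by
  set t := resolvent B l * C with ht
  have hfac := factor_aux B C l hB
  have hunit : IsUnit (algebraMap ℝ (E →L[ℝ] E) l - (B + C)) := by
    rw [hfac]; exact hB.mul (isUnit_one_sub_of_norm_lt_one hC)
  refine ⟨hunit, ?_⟩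
  have hprod : resolvent (B + C) l =
      Ring.inverse ((hB.unit * Units.oneSub t hC : (E →L[ℝ] E)ˣ) : E →L[ℝ] E) := by
    show Ring.inverse _ = _
    congr 1
  have hinv1 : ((hB.unit⁻¹ : (E →L[ℝ] E)ˣ) : E →L[ℝ] E) = resolvent B l := by
    have h := Ring.inverse_unit hB.unit
    rw [hB.unit_spec] at h
    exact h.symm
  rw [hprod, Ring.inverse_unit, mul_inv_rev, Units.val_mul, hinv1]
  have hinv2 : (((Units.oneSub t hC)⁻¹ : (E →L[ℝ] E)ˣ) : E →L[ℝ] E) = ∑' n : ℕ, t ^ n := rfl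
  rw [hinv2]
  exact ((summable_geometric_of_norm_lt_one hC).tsum_mul_right _).symm


private lemma key_pos_aux (B C : E →L[ℝ] E) (l : ℝ)
    (hB : IsUnit (algebraMap ℝ (E →L[ℝ] E) l - B)) (hC : ‖resolvent B l * C‖ < 1)
    (hR : ∀ g : E, 0 ≤ g → 0 ≤ resolvent B l g) (hCpos : ∀ g : E, 0 ≤ g → 0 ≤ C g)
    (f : E) (hf : 0 ≤ f) :
    resolvent B l f ≤ resolvent (B + C) l f ∧ 0 ≤ resolvent (B + C) l f := by
  set t := resolvent B l * C with ht
  have hsum : Summable fun n : ℕ => t ^ n * resolvent B l :=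
    (summable_geometric_of_norm_lt_one hC).mul_right _
  have happ : resolvent (B + C) l f = ∑' n : ℕ, (t ^ n * resolvent B l) f := by
    rw [(key_aux B C l hB hC).2]
    exact (ContinuousLinearMap.apply ℝ E f).map_tsum hsum
  have hpowpos : ∀ n : ℕ, ∀ g : E, 0 ≤ g → 0 ≤ (t ^ n) g := by
    intro n
    induction n with
    | zero => intro g hg; simpa using hg
    | succ n ih =>
      intro g hg
      rw [pow_succ', ContinuousLinearMap.mul_apply]
      have h2 : 0 ≤ C ((t ^ n) g) := hCpos _ (ih g hg)
      simpa [ht, ContinuousLinearMap.mul_apply] using hR _ h2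
  have hterm : ∀ n : ℕ, 0 ≤ (t ^ n * resolvent B l) f := by
    intro n
    rw [ContinuousLinearMap.mul_apply]
    exact hpowpos n _ (hR f hf)
  have hsumf : Summable fun n : ℕ => (t ^ n * resolvent B l) f :=
    ((ContinuousLinearMap.apply ℝ E f).hasSum hsum.hasSum).summable
  constructor
  · rw [happ]
    have h0 := Summable.le_tsum hsumf 0 (fun j _ => hterm j)
    simpa using h0
  · rw [happ]
    exact tsum_nonneg hterm

private lemma key_norm_aux (B C : E →L[ℝ] E) (l : ℝ)
    (hB : IsUnit (algebraMap ℝ (E →L[ℝ] E) l - B)) {r m : ℝ}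
    (hCr : ‖resolvent B l * C‖ ≤ r) (hr : r < 1) (hm : ‖resolvent B l‖ ≤ m) :
    ‖resolvent (B + C) l‖ ≤ (1 - r)⁻¹ * m := by
  have hr0 : 0 ≤ r := le_trans (norm_nonneg _) hCr
  have hm0 : 0 ≤ m := le_trans (norm_nonneg _) hm
  have hC1 : ‖resolvent B l * C‖ < 1 := lt_of_le_of_lt hCr hr
  rw [(key_aux B C l hB hC1).2]
  refine tsum_of_norm_bounded ((hasSum_geometric_of_lt_one hr0 hr).mul_right m) ?_
  have hb : ∀ n : ℕ, ‖(resolvent B l * C) ^ n * resolvent B l‖ ≤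
      ‖resolvent B l * C‖ ^ n * ‖resolvent B l‖ := by
    intro n
    induction n with
    | zero => simp
    | succ n ih =>
      calc ‖(resolvent B l * C) ^ (n + 1) * resolvent B l‖
          = ‖(resolvent B l * C) * ((resolvent B l * C) ^ n * resolvent B l)‖ := by
            rw [pow_succ' (resolvent B l * C) n, mul_assoc (resolvent B l * C)]
        _ ≤ ‖resolvent B l * C‖ * ‖(resolvent B l * C) ^ n * resolvent B l‖ := norm_mul_le _ _
        _ ≤ ‖resolvent B l * C‖ * (‖resolvent B l * C‖ ^ n * ‖resolvent B l‖) :=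
            mul_le_mul_of_nonneg_left ih (norm_nonneg _)
        _ = ‖resolvent B l * C‖ ^ (n + 1) * ‖resolvent B l‖ := by ring
  intro n
  refine le_trans (hb n) (mul_le_mul ?_ hm (norm_nonneg _) (pow_nonneg hr0 n))
  exact pow_le_pow_left₀ (norm_nonneg _) hCr n

private lemma resolvent_shift_aux (B : E →L[ℝ] E) (l h : ℝ) :
    resolvent (B + algebraMap ℝ (E →L[ℝ] E) h) l = resolvent B (l - h) := by
  show Ring.inverse _ = Ring.inverse _
  congr 1
  rw [map_sub]
  abel





private lemma real_smul_nonneg_aux {g : E} (hg : 0 ≤ g) {c : ℝ} (hc : 0 ≤ c) : 0 ≤ c • g := by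
  have hclosed : IsClosed {c : ℝ | 0 ≤ c • g} :=
    isClosed_le continuous_const (continuous_id.smul continuous_const)
  have hdyadic : ∀ k m : ℕ, 0 ≤ ((m : ℝ) / 2 ^ k) • g := by
    intro k
    induction k with
    | zero =>
      intro m
      have : ((m : ℝ) / 2 ^ 0) • g = m • g := by
        rw [pow_zero, div_one, Nat.cast_smul_eq_nsmul]
      rw [this]
      exact nsmul_nonneg hg m
    | succ k ih =>
      intro m
      apply nsmul_two_semiclosed
      have : 2 • (((m : ℝ) / 2 ^ (k + 1)) • g) = ((m : ℝ) / 2 ^ k) • g := by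
        rw [two_smul, ← add_smul]
        congr 1
        field_simp
        ring
      rw [this]
      exact ih m
  -- approximate c from below by dyadics
  have htend : Filter.Tendsto (fun k : ℕ => ((⌊c * 2 ^ k⌋₊ : ℝ) / 2 ^ k)) Filter.atTop (nhds c) := by
    have hlow : Filter.Tendsto (fun k : ℕ => c - (1 / 2 : ℝ) ^ k) Filter.atTop (nhds c) := by
      have h0 : Filter.Tendsto (fun k : ℕ => ((1 / 2 : ℝ)) ^ k) Filter.atTop (nhds 0) :=
        tendsto_pow_atTop_nhds_zero_of_lt_one (by norm_num) (by norm_num)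
      simpa using (tendsto_const_nhds.sub h0)
    refine tendsto_of_tendsto_of_tendsto_of_le_of_le hlow tendsto_const_nhds ?_ ?_
    · intro k
      have h2k : (0 : ℝ) < 2 ^ k := by positivity
      have := Nat.sub_one_lt_floor (c * 2 ^ k)
      rw [le_div_iff₀ h2k]
      have : c * 2 ^ k - 1 ≤ (⌊c * 2 ^ k⌋₊ : ℝ) := this.le
      calc (c - (1 / 2 : ℝ) ^ k) * 2 ^ k = c * 2 ^ k - 1 := by
            rw [sub_mul, ← mul_pow]; norm_num
        _ ≤ (⌊c * 2 ^ k⌋₊ : ℝ) := this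
    · intro k
      have h2k : (0 : ℝ) < 2 ^ k := by positivity
      rw [div_le_iff₀ h2k]
      exact le_trans (Nat.floor_le (by positivity)) (le_refl _)
  have hmem : ∀ k : ℕ, ((⌊c * 2 ^ k⌋₊ : ℝ) / 2 ^ k) ∈ {c : ℝ | 0 ≤ c • g} := fun k => hdyadic k _
  exact hclosed.mem_of_tendsto htend (Filter.Eventually.of_forall hmem)


private lemma descend_aux (B : E →L[ℝ] E) (lo hi : ℝ) (hle : lo ≤ hi)
    (hres : ∀ μ ∈ Set.Icc lo hi, IsUnit (algebraMap ℝ (E →L[ℝ] E) μ - B))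
    {Cb : ℝ} (hCb : ∀ μ ∈ Set.Icc lo hi, ‖resolvent B μ‖ ≤ Cb)
    (hpos : ∀ g : E, 0 ≤ g → 0 ≤ resolvent B hi g) :
    ∀ f : E, 0 ≤ f → resolvent B hi f ≤ resolvent B lo f ∧ 0 ≤ resolvent B lo f := by
  have hCb0 : 0 ≤ Cb := le_trans (norm_nonneg _) (hCb hi ⟨hle, le_refl hi⟩)
  set h : ℝ := (Cb + 1)⁻¹ with hh
  have hhpos : 0 < h := inv_pos.2 (by linarith)
  have main : ∀ n : ℕ, ∀ μ ∈ Set.Icc lo hi, hi - μ ≤ (n : ℝ) * h →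
      (∀ f : E, 0 ≤ f → resolvent B hi f ≤ resolvent B μ f ∧ 0 ≤ resolvent B μ f) := by
    intro n
    induction n with
    | zero =>
      intro μ hμ hd f hf
      have hμhi : μ = hi := le_antisymm hμ.2 (by simpa using hd)
      rw [hμhi]
      exact ⟨le_refl _, hpos f hf⟩
    | succ n ih =>
      intro μ hμ hd
      by_cases hcase : hi - μ ≤ (n : ℝ) * h
      · exact ih μ hμ hcase
      push_neg at hcase
      have hnh0 : 0 ≤ (n : ℝ) * h := mul_nonneg (Nat.cast_nonneg n) hhpos.le
      have hμlt : μ < hi := by linarith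
      set μ' : ℝ := min (μ + h) hi with hμ'def
      have hμ'mem : μ' ∈ Set.Icc lo hi :=
        ⟨le_min (by linarith [hμ.1]) hle, min_le_right _ _⟩
      have hd' : hi - μ' ≤ (n : ℝ) * h := by
        rcases min_le_iff.mp (le_refl μ') with _ | _
        · rcases le_total (μ + h) hi with hc | hc
          · rw [hμ'def, min_eq_left hc]
            push_cast at hd
            linarith
          · rw [hμ'def, min_eq_right hc]
            linarith
        · rcases le_total (μ + h) hi with hc | hc
          · rw [hμ'def, min_eq_left hc]
            push_cast at hd
            linarith
          · rw [hμ'def, min_eq_right hc]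
            linarith
      have hstep1 : μ < μ' := lt_min (by linarith) hμlt
      have hstep2 : μ' - μ ≤ h := by
        have := min_le_left (μ + h) hi
        rw [← hμ'def] at this
        linarith
      have hB' : IsUnit (algebraMap ℝ (E →L[ℝ] E) μ' - B) := hres μ' hμ'mem
      set c : ℝ := μ' - μ with hcdef
      have hc0 : 0 < c := by linarith
      have hone : ‖(1 : E →L[ℝ] E)‖ ≤ 1 := ContinuousLinearMap.norm_id_le
      have hnormalg : ‖algebraMap ℝ (E →L[ℝ] E) c‖ ≤ c := by
        rw [Algebra.algebraMap_eq_smul_one]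
        refine le_trans (norm_smul_le c 1) ?_
        rw [Real.norm_eq_abs, abs_of_pos hc0]
        calc c * ‖(1 : E →L[ℝ] E)‖ ≤ c * 1 := mul_le_mul_of_nonneg_left hone hc0.le
          _ = c := mul_one c
      have hnormc : ‖resolvent B μ' * algebraMap ℝ (E →L[ℝ] E) c‖ < 1 := by
        have h2 : ‖resolvent B μ'‖ ≤ Cb := hCb μ' hμ'mem
        calc ‖resolvent B μ' * algebraMap ℝ (E →L[ℝ] E) c‖
            ≤ ‖resolvent B μ'‖ * ‖algebraMap ℝ (E →L[ℝ] E) c‖ := norm_mul_le _ _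
          _ ≤ Cb * h := mul_le_mul h2 (le_trans hnormalg hstep2) (norm_nonneg _) hCb0
          _ < 1 := by
              have hlt : Cb / (Cb + 1) < 1 :=
                (div_lt_one (by linarith : (0:ℝ) < Cb + 1)).2 (by linarith)
              rw [div_eq_mul_inv] at hlt
              rw [hh]
              exact hlt
      have hRμ'pos : ∀ g : E, 0 ≤ g → 0 ≤ resolvent B μ' g := fun g hg =>
        (ih μ' hμ'mem hd' g hg).2
      have hCpos : ∀ g : E, 0 ≤ g → 0 ≤ (algebraMap ℝ (E →L[ℝ] E) c) g := by
        intro g hg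
        rw [Algebra.algebraMap_eq_smul_one]
        simpa using real_smul_nonneg_aux hg hc0.le
      have hshift : resolvent (B + algebraMap ℝ (E →L[ℝ] E) c) μ' = resolvent B μ := by
        rw [resolvent_shift_aux]
        congr 1
        rw [hcdef]
        ring
      intro f hf
      have hkp := key_pos_aux B (algebraMap ℝ (E →L[ℝ] E) c) μ' hB' hnormc hRμ'pos hCpos f hf
      rw [hshift] at hkp
      have hih := ih μ' hμ'mem hd' f hf
      exact ⟨le_trans hih.1 hkp.1, hkp.2⟩
  obtain ⟨n, hn⟩ := exists_nat_ge ((hi - lo) / h)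
  have hlo : hi - lo ≤ (n : ℝ) * h := by
    rw [div_le_iff₀ hhpos] at hn
    linarith
  exact main n lo ⟨le_refl lo, hle⟩ hlo

end Aux


/-- A positive vector `u` is a quasi-interior point of the positive cone if the
principal ideal generated by `u` is dense. -/
def IsQuasiInteriorPoint {E : Type*} [NormedAddCommGroup E] [Lattice E] [HasSolidNorm E] [IsOrderedAddMonoid E] [Module ℝ E] (u : E) : Prop :=
  0 ≤ u ∧ Dense {x : E | ∃ c : ℝ, 0 ≤ c ∧ |x| ≤ c • u}

/-- An operator `T` is strongly positive with respect to `u` if `T f ≥ ε u` for some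
`ε > 0`, for every `f > 0`. -/
def StronglyPosOp {E : Type*} [NormedAddCommGroup E] [Lattice E] [HasSolidNorm E] [IsOrderedAddMonoid E] [Module ℝ E]
    (u : E) (T : E →L[ℝ] E) : Prop :=
  ∀ f : E, 0 ≤ f → f ≠ 0 → ∃ ε : ℝ, 0 < ε ∧ ε • u ≤ T f

/-- **Theorem 3.7 (i) and (ii)** (real-line, bounded-operator form).
Suppose `R(λ,A) ≫_u 0` for all `λ ∈ (λ₀, λ₁)` and `‖R(λ,A)‖ ≤ M` for all real `λ ≥ λ₁`.
Then for every positive operator `K` with `‖K‖ < 1/M`: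
(i) every real `λ ≥ λ₁` lies in the resolvent set of `A + K`;
(ii) every real `λ < λ₁` strictly above the real spectral bound of `A + K` lies in the
resolvent set of `A + K` and `R(λ, A+K) ≫_u 0`. -/
theorem perturbed_resolvent_strongly_positive
    {E : Type*} [NormedAddCommGroup E] [Lattice E] [HasSolidNorm E] [IsOrderedAddMonoid E] [NormedSpace ℝ E] [CompleteSpace E]
    [Nontrivial E]
    (u : E) (hu : IsQuasiInteriorPoint u)
    (A : E →L[ℝ] E) (l₀ l₁ M : ℝ) (hl : l₀ < l₁) (hM : 0 < M)
    (h₁ : ∀ l ∈ Set.Ioo l₀ l₁, l ∈ resolventSet ℝ A ∧ StronglyPosOp u (resolvent A l))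
    (h₂ : ∀ l : ℝ, l₁ ≤ l → l ∈ resolventSet ℝ A ∧ ‖resolvent A l‖ ≤ M)
    (K : E →L[ℝ] E) (hK : ∀ x : E, 0 ≤ x → 0 ≤ K x) (hKnorm : ‖K‖ < 1 / M) :
    (∀ l : ℝ, l₁ ≤ l → l ∈ resolventSet ℝ (A + K)) ∧
      (∀ l : ℝ, l < l₁ → (∀ μ : ℝ, μ ∈ spectrum ℝ (A + K) → μ < l) →
        l ∈ resolventSet ℝ (A + K) ∧ StronglyPosOp u (resolvent (A + K) l)) := by

  have hK0 : (0:ℝ) ≤ ‖K‖ := norm_nonneg K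
  have hMK : M * ‖K‖ < 1 := by
    have h := mul_lt_mul_of_pos_left hKnorm hM
    rwa [mul_one_div_cancel hM.ne'] at h
  constructor
  · intro l hl'
    obtain ⟨hAres, hAnorm⟩ := h₂ l hl'
    have hAres' : IsUnit (algebraMap ℝ (E →L[ℝ] E) l - A) := hAres
    have hnorm : ‖resolvent A l * K‖ < 1 := by
      calc ‖resolvent A l * K‖ ≤ ‖resolvent A l‖ * ‖K‖ := norm_mul_le _ _
        _ ≤ M * ‖K‖ := mul_le_mul_of_nonneg_right hAnorm hK0
        _ < 1 := hMK
    exact (key_aux A K l hAres' hnorm).1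
  · intro l hllt hsp
    have hBres : ∀ ν : ℝ, l ≤ ν → IsUnit (algebraMap ℝ (E →L[ℝ] E) ν - (A + K)) := by
      intro ν hν
      by_contra hcon
      have : ν < l := hsp ν (spectrum.mem_iff.mpr hcon)
      linarith
    have hMK0 : (0:ℝ) ≤ M * ‖K‖ := mul_nonneg hM.le hK0
    have hKM1 : 0 < 1 - M * ‖K‖ := by linarith
    set d : ℝ := min (min ((l₁ - l₀)/2) ((l₁ - l)/2)) ((1 - M*‖K‖)/(2*M)) with hddef
    have hd1 : d ≤ (l₁ - l₀)/2 := le_trans (min_le_left _ _) (min_le_left _ _)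
    have hd2 : d ≤ (l₁ - l)/2 := le_trans (min_le_left _ _) (min_le_right _ _)
    have hd3 : d ≤ (1 - M*‖K‖)/(2*M) := min_le_right _ _
    have hd0 : 0 < d :=
      lt_min (lt_min (by linarith) (by linarith)) (div_pos hKM1 (by linarith))
    set ls : ℝ := l₁ - d with hlsdef
    have hls0 : l₀ < ls := by rw [hlsdef]; linarith
    have hls1 : ls < l₁ := by rw [hlsdef]; linarith
    have hlsl : l < ls := by rw [hlsdef]; linarith
    have hdM : d * (2*M) ≤ 1 - M*‖K‖ := (le_div_iff₀ (by linarith : (0:ℝ) < 2*M)).mp hd3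
    have hdM2 : d * M ≤ (1 - M*‖K‖)/2 := by nlinarith
    have hdM1 : d * M < 1 := by linarith
    obtain ⟨hA1res, hA1norm⟩ := h₂ l₁ le_rfl
    have hA1res' : IsUnit (algebraMap ℝ (E →L[ℝ] E) l₁ - A) := hA1res
    have hone : ‖(1 : E →L[ℝ] E)‖ ≤ 1 := ContinuousLinearMap.norm_id_le
    have hnormalgd : ‖algebraMap ℝ (E →L[ℝ] E) d‖ ≤ d := by
      rw [Algebra.algebraMap_eq_smul_one]
      refine le_trans (norm_smul_le d 1) ?_
      rw [Real.norm_eq_abs, abs_of_pos hd0]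
      calc d * ‖(1 : E →L[ℝ] E)‖ ≤ d * 1 := mul_le_mul_of_nonneg_left hone hd0.le
        _ = d := mul_one d
    have hCr : ‖resolvent A l₁ * algebraMap ℝ (E →L[ℝ] E) d‖ ≤ d * M := by
      calc ‖resolvent A l₁ * algebraMap ℝ (E →L[ℝ] E) d‖
          ≤ ‖resolvent A l₁‖ * ‖algebraMap ℝ (E →L[ℝ] E) d‖ := norm_mul_le _ _
        _ ≤ M * d := mul_le_mul hA1norm hnormalgd (norm_nonneg _) hM.le
        _ = d * M := mul_comm M d
    have hnormAls : ‖resolvent A ls‖ ≤ (1 - d*M)⁻¹ * M := by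
      have h := key_norm_aux A (algebraMap ℝ (E →L[ℝ] E) d) l₁ hA1res' hCr hdM1 hA1norm
      rw [resolvent_shift_aux, ← hlsdef] at h
      exact h
    obtain ⟨hAls, hAlsStrong⟩ := h₁ ls ⟨hls0, hls1⟩
    have hAls' : IsUnit (algebraMap ℝ (E →L[ℝ] E) ls - A) := hAls
    have hRls_pos : ∀ g : E, 0 ≤ g → 0 ≤ resolvent A ls g := by
      intro g hg
      by_cases hg0 : g = 0
      · simp [hg0]
      · obtain ⟨ε, hε, hεle⟩ := hAlsStrong g hg hg0
        exact le_trans (real_smul_nonneg_aux hu.1 hε.le) hεle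
    have hnormlsK : ‖resolvent A ls * K‖ < 1 := by
      have h1 : 0 < 1 - d*M := by linarith
      have h2 : M * ‖K‖ < 1 - d*M := by linarith
      calc ‖resolvent A ls * K‖ ≤ ‖resolvent A ls‖ * ‖K‖ := norm_mul_le _ _
        _ ≤ ((1 - d*M)⁻¹ * M) * ‖K‖ := mul_le_mul_of_nonneg_right hnormAls hK0
        _ = (1 - d*M)⁻¹ * (M * ‖K‖) := mul_assoc _ _ _
        _ < (1 - d*M)⁻¹ * (1 - d*M) := mul_lt_mul_of_pos_left h2 (inv_pos.2 h1)
        _ = 1 := inv_mul_cancel₀ h1.ne'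
    have hkeyls := fun (f : E) (hf : 0 ≤ f) =>
      key_pos_aux A K ls hAls' hnormlsK hRls_pos hK f hf
    have hBls_pos : ∀ g : E, 0 ≤ g → 0 ≤ resolvent (A+K) ls g := fun g hg => (hkeyls g hg).2
    have hcont : ContinuousOn (fun μ : ℝ => resolvent (A+K) μ) (Set.Icc l ls) := by
      intro μ hμ
      have hμres : μ ∈ resolventSet ℝ (A+K) := hBres μ hμ.1
      exact (spectrum.hasDerivAt_resolvent hμres).continuousAt.continuousWithinAt
    obtain ⟨Cb, hCb⟩ := (isCompact_Icc).exists_bound_of_continuousOn hcont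
    have hresIcc : ∀ μ ∈ Set.Icc l ls, IsUnit (algebraMap ℝ (E →L[ℝ] E) μ - (A+K)) :=
      fun μ hμ => hBres μ hμ.1
    have hdesc := descend_aux (A+K) l ls hlsl.le hresIcc hCb hBls_pos
    refine ⟨hBres l le_rfl, ?_⟩
    intro f hf hf0
    obtain ⟨ε, hε, hεle⟩ := hAlsStrong f hf hf0
    exact ⟨ε, hε, le_trans hεle (le_trans (hkeyls f hf).1 (hdesc f hf).1)⟩
end

section
/- Fix an integer d ≥ 1. The set of all real d × d matrices A having a real eigenvalue λ0 (i.e., there exists a nonzero vector v ∈ ℝ^d with A·v = λ0·v) such that the resolvent of A is eventually strongly positive at λ0 — meaning there exists λ1 > λ0 such that for every λ ∈ (λ0, λ1] the matrix λI − A is invertible and all entries of (λI − A)⁻¹ are strictly positive — is an open subset of the space ℝ^{d×d} of real d × d matrices. -/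
open Filter Topology Finset

attribute [local instance] Matrix.linftyOpNormedRing Matrix.linftyOpNormedAlgebra

private lemma perron {d : ℕ} (hd : 1 ≤ d) (R : Matrix (Fin d) (Fin d) ℝ)
    (hR : ∀ i j, 0 < R i j) :
    ∃ ρ : ℝ, 0 < ρ ∧ ∃ v : Fin d → ℝ, (∀ i, 0 < v i) ∧ R.mulVec v = ρ • v := by
  haveI : NeZero d := ⟨by omega⟩
  have hne : (Finset.univ : Finset (Fin d)).Nonempty := Finset.univ_nonempty
  set m : ℝ := Finset.univ.inf' hne fun i => Finset.univ.inf' hne fun j => R i j with hm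
  have hmle : ∀ i j, m ≤ R i j := fun i j =>
    le_trans (Finset.inf'_le _ (Finset.mem_univ i)) (Finset.inf'_le _ (Finset.mem_univ j))
  have hmpos : 0 < m := by
    rw [hm, Finset.lt_inf'_iff]
    intro i _
    rw [Finset.lt_inf'_iff]
    exact fun j _ => hR i j
  set C : ℝ := Finset.univ.sup' hne fun j => ∑ i, R i j with hC
  have hCge : ∀ j, (∑ i, R i j) ≤ C := fun j =>
    Finset.le_sup' (f := fun j => ∑ i, R i j) (Finset.mem_univ j)
  have hCpos : 0 < C := lt_of_lt_of_le (Finset.sum_pos (fun i _ => hR i ⟨0, hd⟩) hne) (hCge _)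
  set δ : ℝ := m / C with hδ
  have hδpos : 0 < δ := div_pos hmpos hCpos
  have hdmC : (d : ℝ) * m ≤ C := by
    calc (d : ℝ) * m = ∑ _i : Fin d, m := by simp [mul_comm]
    _ ≤ ∑ i, R i ⟨0, hd⟩ := Finset.sum_le_sum fun i _ => hmle i _
    _ ≤ C := hCge _
  set K : Set (Fin d → ℝ) := {x | (∀ i, δ ≤ x i) ∧ ∑ i, x i = 1} with hK
  -- basic facts about members of K
  have hKpos : ∀ x ∈ K, ∀ i, 0 < x i := fun x hx i => hδpos.trans_le (hx.1 i)
  have hKle1 : ∀ x ∈ K, ∀ i, x i ≤ 1 := by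
    intro x hx i
    rw [← hx.2]
    exact Finset.single_le_sum (fun j _ => (hKpos x hx j).le) (Finset.mem_univ i)
  -- K is nonempty
  have hKne : K.Nonempty := by
    refine ⟨fun _ => 1 / d, ⟨fun i => ?_, by
      simp [Finset.sum_const]⟩⟩
    rw [hδ, div_le_div_iff₀ hCpos (by positivity)]
    linarith [hdmC]
  -- K is compact
  have hKcomp : IsCompact K := by
    apply Metric.isCompact_of_isClosed_isBounded
    · have : K = (⋂ i, {x : Fin d → ℝ | δ ≤ x i}) ∩ {x : Fin d → ℝ | ∑ i, x i = 1} := by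
        ext x; simp [hK, Set.mem_iInter]
      rw [this]
      refine IsClosed.inter (isClosed_iInter fun i => ?_) ?_
      · exact isClosed_le continuous_const (continuous_apply i)
      · exact isClosed_eq (continuous_finset_sum _ fun i _ => continuous_apply i)
          continuous_const
    · rw [Metric.isBounded_iff_subset_closedBall 0]
      refine ⟨1, fun x hx => ?_⟩
      rw [Metric.mem_closedBall, dist_zero_right]
      rw [pi_norm_le_iff_of_nonneg zero_le_one]
      intro i
      rw [Real.norm_eq_abs, abs_le]
      exact ⟨by linarith [hKpos x hx i], hKle1 x hx i⟩
  -- the Collatz-Wielandt function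
  set φ : (Fin d → ℝ) → ℝ := fun x => Finset.univ.inf' hne fun i => R.mulVec x i / x i with hφ
  have hφcont : ContinuousOn φ K := by
    apply ContinuousOn.finset_inf'_apply hne
    intro i _
    apply ContinuousOn.div
    · show ContinuousOn (fun x : Fin d → ℝ => ∑ j, R i j * x j) K
      exact Continuous.continuousOn
        (continuous_finset_sum _ fun j _ => continuous_const.mul (continuous_apply j))
    · exact (continuous_apply i).continuousOn
    · exact fun x hx => (hKpos x hx i).ne'
  obtain ⟨v, hvK, hvmax⟩ := hKcomp.exists_isMaxOn hKne hφcont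
  set ρ : ℝ := φ v with hρ
  have hvpos : ∀ i, 0 < v i := hKpos v hvK
  have hmulm : ∀ x ∈ K, ∀ i, m ≤ R.mulVec x i := by
    intro x hx i
    have h2 : ∑ j, m * x j ≤ ∑ j, R i j * x j :=
      Finset.sum_le_sum fun j _ => mul_le_mul_of_nonneg_right (hmle i j) (hKpos x hx j).le
    calc m = ∑ j, m * x j := by rw [← Finset.mul_sum, hx.2, mul_one]
    _ ≤ _ := h2
  have hmulpos : ∀ x ∈ K, ∀ i, 0 < R.mulVec x i := fun x hx i =>
    hmpos.trans_le (hmulm x hx i)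
  have hsumle : ∀ x ∈ K, ∑ i, R.mulVec x i ≤ C := by
    intro x hx
    have h3 : ∑ i, R.mulVec x i = ∑ j, (∑ i, R i j) * x j := by
      simp only [Matrix.mulVec, dotProduct]
      rw [Finset.sum_comm]
      simp [Finset.sum_mul]
    rw [h3]
    calc ∑ j, (∑ i, R i j) * x j ≤ ∑ j, C * x j := Finset.sum_le_sum fun j _ =>
          mul_le_mul_of_nonneg_right (hCge j) (hKpos x hx j).le
    _ = C := by rw [← Finset.mul_sum, hx.2, mul_one]
  have hρle : ∀ i, ρ * v i ≤ R.mulVec v i := by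
    intro i
    have h1 : ρ ≤ R.mulVec v i / v i := Finset.inf'_le _ (Finset.mem_univ i)
    rwa [le_div_iff₀ (hvpos i)] at h1
  have hρpos : 0 < ρ := by
    rw [hρ, hφ, Finset.lt_inf'_iff]
    exact fun i _ => div_pos (hmulpos v hvK i) (hvpos i)
  refine ⟨ρ, hρpos, v, hvpos, ?_⟩
  by_contra hne'
  set y : Fin d → ℝ := R.mulVec v - ρ • v with hy
  have hynn : ∀ i, 0 ≤ y i := fun i => by
    simp [hy]
    linarith [hρle i]
  have hyne : y ≠ 0 := by
    intro h
    apply hne'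
    ext i
    have := congrFun h i
    simp [hy] at this
    simp
    linarith
  obtain ⟨i₀, hi₀⟩ : ∃ i₀, 0 < y i₀ := by
    by_contra h
    push_neg at h
    exact hyne (funext fun i => le_antisymm (h i) (hynn i))
  set w' : Fin d → ℝ := R.mulVec v with hw'
  have hw'pos : ∀ i, 0 < w' i := hmulpos v hvK
  have hkey : ∀ i, ρ * w' i + m * y i₀ ≤ R.mulVec w' i := by
    intro i
    have hsplit : R.mulVec w' i = ρ * R.mulVec v i + R.mulVec y i := by
      have h4 : w' = ρ • v + y := by rw [hy]; ext j; simp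
      rw [show R.mulVec w' i = R.mulVec (ρ • v + y) i from by rw [← h4],
        Matrix.mulVec_add, Matrix.mulVec_smul]
      simp
    have hRy : m * y i₀ ≤ R.mulVec y i := by
      calc m * y i₀ ≤ R i i₀ * y i₀ := mul_le_mul_of_nonneg_right (hmle i i₀) (hynn i₀)
      _ ≤ ∑ j, R i j * y j := Finset.single_le_sum
          (fun j _ => mul_nonneg (hR i j).le (hynn j)) (Finset.mem_univ i₀)
      _ = R.mulVec y i := rfl
    have h5 := hρle i
    rw [hsplit]
    have : ρ * w' i ≤ ρ * R.mulVec v i := le_refl _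
    linarith
  set s : ℝ := ∑ i, w' i with hs
  have hspos : 0 < s := Finset.sum_pos (fun i _ => hw'pos i) hne
  have hsC : s ≤ C := hsumle v hvK
  set w : Fin d → ℝ := s⁻¹ • w' with hw
  have hwK : w ∈ K := by
    constructor
    · intro i
      have h1 : m ≤ w' i := hmulm v hvK i
      have : m / C ≤ w' i / s := by
        rw [div_le_div_iff₀ hCpos hspos]
        nlinarith [hw'pos i, hmpos]
      simpa [hw, hδ, div_eq_inv_mul] using this
    · show ∑ i, (s⁻¹ • w') i = 1
      simp [← Finset.mul_sum, ← hs, inv_mul_cancel₀ hspos.ne']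
  have hcontra : ρ < φ w := by
    rw [hφ, Finset.lt_inf'_iff]
    intro i _
    have hratio : R.mulVec w i / w i = R.mulVec w' i / w' i := by
      rw [hw, Matrix.mulVec_smul]
      simp only [Pi.smul_apply, smul_eq_mul]
      rw [mul_div_mul_left _ _ (inv_ne_zero hspos.ne')]
    rw [hratio, lt_div_iff₀ (hw'pos i)]
    have hwC : w' i ≤ C := le_trans (Finset.single_le_sum
      (fun j _ => (hw'pos j).le) (Finset.mem_univ i)) hsC
    have hmy : 0 < m * y i₀ := mul_pos hmpos hi₀
    nlinarith [hkey i]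
  exact absurd (hvmax hwK) (not_le.2 hcontra)

lemma T_subset_S {d : ℕ} (hd : 1 ≤ d) (A : Matrix (Fin d) (Fin d) ℝ) (μ : ℝ)
    (hU : IsUnit (μ • (1 : Matrix (Fin d) (Fin d) ℝ) - A))
    (hpos : ∀ i j, 0 < (μ • (1 : Matrix (Fin d) (Fin d) ℝ) - A)⁻¹ i j) :
    ∃ l₀ : ℝ, (∃ v : Fin d → ℝ, v ≠ 0 ∧ A.mulVec v = l₀ • v) ∧
      ∃ l₁ : ℝ, l₀ < l₁ ∧ ∀ l ∈ Set.Ioc l₀ l₁,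
        IsUnit (l • (1 : Matrix (Fin d) (Fin d) ℝ) - A) ∧
          ∀ i j, 0 < (l • (1 : Matrix (Fin d) (Fin d) ℝ) - A)⁻¹ i j := by
  set M : Matrix (Fin d) (Fin d) ℝ := μ • 1 - A with hM
  set R : Matrix (Fin d) (Fin d) ℝ := M⁻¹ with hR
  have hdet : IsUnit M.det := (Matrix.isUnit_iff_isUnit_det M).1 hU
  have hMR : M * R = 1 := Matrix.mul_nonsing_inv _ hdet
  have hRM : R * M = 1 := Matrix.nonsing_inv_mul _ hdet
  obtain ⟨ρ, hρpos, v, hvpos, hvR⟩ := perron hd R hpos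
  -- v is an eigenvector of A with eigenvalue μ - ρ⁻¹
  have hMv : M.mulVec v = ρ⁻¹ • v := by
    have h1 : M.mulVec (R.mulVec v) = v := by
      rw [Matrix.mulVec_mulVec, hMR, Matrix.one_mulVec]
    rw [hvR, Matrix.mulVec_smul] at h1
    calc M.mulVec v = ρ⁻¹ • (ρ • M.mulVec v) := by
          rw [smul_smul, inv_mul_cancel₀ hρpos.ne', one_smul]
    _ = ρ⁻¹ • v := by rw [h1]
  have hAv : A.mulVec v = (μ - ρ⁻¹) • v := by
    have h2 : M.mulVec v = μ • v - A.mulVec v := by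
      rw [hM, Matrix.sub_mulVec, Matrix.smul_mulVec, Matrix.one_mulVec]
    rw [hMv] at h2
    rw [sub_smul, h2]
    abel
  refine ⟨μ - ρ⁻¹, ⟨v, ?_, hAv⟩, μ, by simp [hρpos, inv_pos], ?_⟩
  · intro h
    exact absurd (congrFun h ⟨0, hd⟩) (hvpos ⟨0, hd⟩).ne'
  intro l hl
  set t : ℝ := μ - l with ht
  have ht0 : 0 ≤ t := by simp [ht]; linarith [hl.2]
  have htρ : t * ρ < 1 := by
    have : t < ρ⁻¹ := by simp [ht]; linarith [hl.1]
    calc t * ρ < ρ⁻¹ * ρ := by exact mul_lt_mul_of_pos_right this hρpos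
    _ = 1 := inv_mul_cancel₀ hρpos.ne'
  -- the conjugated matrix B'
  set B' : Matrix (Fin d) (Fin d) ℝ :=
    Matrix.of fun i j => (v i)⁻¹ * (t * R i j) * v j with hB'
  have hB'nn : ∀ i j, 0 ≤ B' i j := fun i j => by
    have := (hvpos i); have := hvpos j; have := hpos i j
    rw [hB']
    dsimp
    positivity
  have hrow : ∀ i, ∑ j, B' i j = t * ρ := by
    intro i
    have h3 : ∑ j, B' i j = (v i)⁻¹ * t * ∑ j, R i j * v j := by
      rw [Finset.mul_sum]
      refine Finset.sum_congr rfl fun j _ => by rw [hB']; dsimp; ring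
    have h4 : ∑ j, R i j * v j = ρ * v i := by
      have := congrFun hvR i
      simpa [Matrix.mulVec, dotProduct] using this
    rw [h3, h4]
    field_simp [(hvpos i).ne']
  have hB'norm : ‖B'‖ < 1 := by
    rw [Matrix.linfty_opNorm_def]
    rw [show (1 : ℝ) = ((1 : NNReal) : ℝ) from rfl, NNReal.coe_lt_coe]
    rw [Finset.sup_lt_iff (by norm_num : (⊥ : NNReal) < 1)]
    intro i _
    rw [show (1 : NNReal) = ⟨1, zero_le_one⟩ from rfl]
    apply NNReal.coe_lt_coe.1
    push_cast
    have : ∑ j, ‖B' i j‖ = t * ρ := by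
      rw [← hrow i]
      exact Finset.sum_congr rfl fun j _ => Real.norm_of_nonneg (hB'nn i j)
    rw [this]
    exact htρ
  -- Neumann series for (1 - B')
  have hUnit' : IsUnit ((1 : Matrix (Fin d) (Fin d) ℝ) - B') :=
    isUnit_one_sub_of_norm_lt_one hB'norm
  set N' : Matrix (Fin d) (Fin d) ℝ := Ring.inverse (1 - B') with hN'
  have hgeom : HasSum (fun n : ℕ => B' ^ n) N' := hasSum_geom_series_inverse B' hB'norm
  have hpownn : ∀ (n : ℕ) (i j : Fin d), 0 ≤ (B' ^ n) i j := by
    intro n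
    induction n with
    | zero => intro i j; rw [pow_zero]; by_cases h : i = j <;> simp [Matrix.one_apply, h]
    | succ n ih =>
      intro i j
      rw [pow_succ, Matrix.mul_apply]
      exact Finset.sum_nonneg fun k _ => mul_nonneg (ih i k) (hB'nn k j)
  have hentry : ∀ i j, HasSum (fun n : ℕ => (B' ^ n) i j) (N' i j) := by
    intro i j
    have hcont : Continuous (fun M : Matrix (Fin d) (Fin d) ℝ => M i j) :=
      (continuous_apply j).comp (continuous_apply i)
    exact hgeom.map (AddMonoidHom.mk' (fun M : Matrix (Fin d) (Fin d) ℝ => M i j)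
      (fun _ _ => rfl)) hcont
  have hN'nn : ∀ i j, 0 ≤ N' i j := fun i j =>
    hasSum_le (fun n => hpownn n i j) hasSum_zero (hentry i j)
  have hN'diag : ∀ i, 1 ≤ N' i i := by
    intro i
    have h5 := le_hasSum (hentry i i) 0 fun n _ => hpownn n i i
    simpa using h5
  have hmulN' : (1 - B') * N' = 1 := Ring.mul_inverse_cancel _ hUnit'
  -- the diagonal conjugation
  set V : Matrix (Fin d) (Fin d) ℝ := Matrix.diagonal v with hV
  set V' : Matrix (Fin d) (Fin d) ℝ := Matrix.diagonal (fun i => (v i)⁻¹) with hV'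
  have hVV' : V * V' = 1 := by
    rw [hV, hV', Matrix.diagonal_mul_diagonal]
    convert Matrix.diagonal_one with i
    exact mul_inv_cancel₀ (hvpos i).ne'
  have hV'V : V' * V = 1 := by
    rw [hV, hV', Matrix.diagonal_mul_diagonal]
    convert Matrix.diagonal_one with i
    exact inv_mul_cancel₀ (hvpos i).ne'
  have hBconj : t • R = V * B' * V' := by
    ext i j
    rw [hV, hV', Matrix.mul_diagonal, Matrix.diagonal_mul, hB']
    dsimp
    field_simp [(hvpos i).ne', (hvpos j).ne']
  set N : Matrix (Fin d) (Fin d) ℝ := V * N' * V' with hN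
  have hNright : (1 - t • R) * N = 1 := by
    have h6 : (1 : Matrix (Fin d) (Fin d) ℝ) - t • R = V * (1 - B') * V' := by
      rw [Matrix.mul_sub, Matrix.mul_one, Matrix.sub_mul, hVV', ← hBconj]
    rw [h6, hN]
    calc V * (1 - B') * V' * (V * N' * V')
        = V * ((1 - B') * (V' * V) * N') * V' := by
          simp only [Matrix.mul_assoc]
    _ = V * ((1 - B') * N') * V' := by rw [hV'V, Matrix.mul_one]
    _ = 1 := by rw [hmulN', Matrix.mul_one, hVV']
  have hNnn : ∀ i j, 0 ≤ N i j := by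
    intro i j
    rw [hN, hV, hV', Matrix.mul_diagonal, Matrix.diagonal_mul]
    have := hvpos i; have := hvpos j; have := hN'nn i j
    positivity
  have hNdiag : ∀ i, 0 < N i i := by
    intro i
    rw [hN, hV, hV', Matrix.mul_diagonal, Matrix.diagonal_mul]
    have h7 := hvpos i; have h8 := hN'diag i
    have : (0:ℝ) < N' i i := lt_of_lt_of_le one_pos h8
    positivity
  -- factorization of the resolvent
  have hfact : l • (1 : Matrix (Fin d) (Fin d) ℝ) - A = M * (1 - t • R) := by
    rw [Matrix.mul_sub, Matrix.mul_one, Matrix.mul_smul, hMR, hM, ht, sub_smul]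
    abel
  have hUnitl : IsUnit (l • (1 : Matrix (Fin d) (Fin d) ℝ) - A) := by
    rw [hfact]
    refine hU.mul ?_
    rw [Matrix.isUnit_iff_isUnit_det]
    exact Matrix.isUnit_det_of_right_inverse hNright
  refine ⟨hUnitl, ?_⟩
  have hinvfact : (l • (1 : Matrix (Fin d) (Fin d) ℝ) - A)⁻¹ = N * R := by
    rw [hfact, Matrix.mul_inv_rev, Matrix.inv_eq_right_inv hNright, hR]
  intro i j
  rw [hinvfact, Matrix.mul_apply]
  have hterm : 0 < N i i * R i j := mul_pos (hNdiag i) (hpos i j)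
  have hle : N i i * R i j ≤ ∑ k, N i k * R k j :=
    Finset.single_le_sum (fun k _ => mul_nonneg (hNnn i k) (hpos k j).le)
      (Finset.mem_univ i)
  linarith

private lemma open_T (d : ℕ) : IsOpen {A : Matrix (Fin d) (Fin d) ℝ |
    ∃ μ : ℝ, IsUnit (μ • (1 : Matrix (Fin d) (Fin d) ℝ) - A) ∧
      ∀ i j, 0 < (μ • (1 : Matrix (Fin d) (Fin d) ℝ) - A)⁻¹ i j} := by
  have : {A : Matrix (Fin d) (Fin d) ℝ |
      ∃ μ : ℝ, IsUnit (μ • (1 : Matrix (Fin d) (Fin d) ℝ) - A) ∧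
      ∀ i j, 0 < (μ • (1 : Matrix (Fin d) (Fin d) ℝ) - A)⁻¹ i j} =
      ⋃ μ : ℝ, (fun A : Matrix (Fin d) (Fin d) ℝ => μ • (1 : Matrix (Fin d) (Fin d) ℝ) - A) ⁻¹'
        {M : Matrix (Fin d) (Fin d) ℝ | IsUnit M ∧ ∀ i j, 0 < M⁻¹ i j} := by
    ext A; simp [Set.mem_iUnion]
  rw [this]
  refine isOpen_iUnion fun μ => ?_
  have hcont : Continuous (fun A : Matrix (Fin d) (Fin d) ℝ =>
      μ • (1 : Matrix (Fin d) (Fin d) ℝ) - A) := (continuous_const.sub continuous_id)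
  refine (IsOpen.preimage hcont ?_)
  rw [isOpen_iff_mem_nhds]
  rintro M ⟨hM, hpos⟩
  have hdet : M.det ≠ 0 := by
    intro h
    exact (by simpa [h] using (Matrix.isUnit_iff_isUnit_det M).1 hM : IsUnit (0:ℝ)).ne_zero rfl
  have hdetC : Continuous fun N : Matrix (Fin d) (Fin d) ℝ => N.det := continuous_id.matrix_det
  have h1 : ∀ᶠ N : Matrix (Fin d) (Fin d) ℝ in 𝓝 M, N.det ≠ 0 :=
    hdetC.continuousAt.eventually_ne hdet
  have hinv : ContinuousAt (Inv.inv : Matrix (Fin d) (Fin d) ℝ → _) M := by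
    apply continuousAt_matrix_inv
    rw [show (Ring.inverse : ℝ → ℝ) = Inv.inv from funext fun x => Ring.inverse_eq_inv x]
    exact continuousAt_inv₀ hdet
  have h2 : ∀ᶠ N : Matrix (Fin d) (Fin d) ℝ in 𝓝 M, ∀ i j, 0 < N⁻¹ i j := by
    rw [Filter.eventually_all]
    intro i
    rw [Filter.eventually_all]
    intro j
    have : ContinuousAt (fun N : Matrix (Fin d) (Fin d) ℝ => N⁻¹ i j) M := by
      exact ContinuousAt.comp (((continuous_apply j).comp (continuous_apply i)).continuousAt) hinv
    exact ContinuousAt.eventually_lt continuousAt_const this (hpos i j)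
  filter_upwards [h1, h2] with N hN1 hN2
  exact ⟨(Matrix.isUnit_iff_isUnit_det N).2 (isUnit_iff_ne_zero.2 hN1), hN2⟩

/-- **Proposition 3.6.** The set of real `d × d` matrices having an eigenvalue at which
the resolvent is eventually strongly positive is open. -/
theorem isOpen_matrices_with_eventually_strongly_positive_resolvent
    (d : ℕ) (hd : 1 ≤ d) :
    IsOpen {A : Matrix (Fin d) (Fin d) ℝ |
      ∃ l₀ : ℝ, (∃ v : Fin d → ℝ, v ≠ 0 ∧ A.mulVec v = l₀ • v) ∧
        ∃ l₁ : ℝ, l₀ < l₁ ∧ ∀ l ∈ Set.Ioc l₀ l₁,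
          IsUnit (l • (1 : Matrix (Fin d) (Fin d) ℝ) - A) ∧
            ∀ i j, 0 < (l • (1 : Matrix (Fin d) (Fin d) ℝ) - A)⁻¹ i j} := by
  have hset : {A : Matrix (Fin d) (Fin d) ℝ |
      ∃ l₀ : ℝ, (∃ v : Fin d → ℝ, v ≠ 0 ∧ A.mulVec v = l₀ • v) ∧
        ∃ l₁ : ℝ, l₀ < l₁ ∧ ∀ l ∈ Set.Ioc l₀ l₁,
          IsUnit (l • (1 : Matrix (Fin d) (Fin d) ℝ) - A) ∧
            ∀ i j, 0 < (l • (1 : Matrix (Fin d) (Fin d) ℝ) - A)⁻¹ i j} =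
      {A : Matrix (Fin d) (Fin d) ℝ |
        ∃ μ : ℝ, IsUnit (μ • (1 : Matrix (Fin d) (Fin d) ℝ) - A) ∧
          ∀ i j, 0 < (μ • (1 : Matrix (Fin d) (Fin d) ℝ) - A)⁻¹ i j} := by
    ext A
    constructor
    · rintro ⟨l₀, _, l₁, hlt, h⟩
      exact ⟨l₁, h l₁ ⟨hlt, le_refl l₁⟩⟩
    · rintro ⟨μ, h1, h2⟩
      exact T_subset_S hd A μ h1 h2
  rw [hset]
  exact open_T d
end

section
/- The set of all real 2 × 2 matrices A such that the matrix semigroup (e^{tA})_{t≥0} is strongly positive — meaning that for every t > 0 all entries of the matrix exponential e^{tA} are strictly positive — is an open subset of the space ℝ^{2×2} of real 2 × 2 matrices. -/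
open NormedSpace Nat

noncomputable def entryCLM (i j : Fin 2) : Matrix (Fin 2) (Fin 2) ℝ →L[ℝ] ℝ :=
  { toLinearMap :=
      { toFun := fun M => M i j
        map_add' := fun _ _ => rfl
        map_smul' := fun _ _ => rfl }
    cont := (continuous_apply j).comp (continuous_apply i) }

lemma summable_entry (M : Matrix (Fin 2) (Fin 2) ℝ) (i j : Fin 2) :
    Summable fun n : ℕ => ((n ! : ℝ))⁻¹ * (M ^ n) i j := by
  letI : NormedRing (Matrix (Fin 2) (Fin 2) ℝ) := Matrix.linftyOpNormedRing
  letI : NormedAlgebra ℝ (Matrix (Fin 2) (Fin 2) ℝ) := Matrix.linftyOpNormedAlgebra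
  have hs : Summable fun n : ℕ => ((n ! : ℝ))⁻¹ • M ^ n := expSeries_summable' M
  have := hs.map (entryCLM i j).toLinearMap.toAddMonoidHom (entryCLM i j).continuous
  exact this

lemma exp_entry (M : Matrix (Fin 2) (Fin 2) ℝ) (i j : Fin 2) :
    exp M i j = ∑' n : ℕ, ((n ! : ℝ))⁻¹ * (M ^ n) i j := by
  letI : NormedRing (Matrix (Fin 2) (Fin 2) ℝ) := Matrix.linftyOpNormedRing
  letI : NormedAlgebra ℝ (Matrix (Fin 2) (Fin 2) ℝ) := Matrix.linftyOpNormedAlgebra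
  have hs : Summable fun n : ℕ => ((n ! : ℝ))⁻¹ • M ^ n := expSeries_summable' M
  have h := (entryCLM i j).map_tsum hs
  have he : exp M = ∑' n : ℕ, ((n ! : ℝ))⁻¹ • M ^ n := by rw [exp_eq_tsum ℝ]
  rw [show exp M i j = entryCLM i j (exp M) from rfl, he, h]
  simp [entryCLM]
  rfl

lemma pow_entry_zero (M : Matrix (Fin 2) (Fin 2) ℝ) (i j : Fin 2) (hij : i ≠ j)
    (h : M i j = 0) (n : ℕ) : (M ^ n) i j = 0 := by
  induction n with
  | zero => simp [Matrix.one_apply, hij]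
  | succ n ih =>
    rw [pow_succ, Matrix.mul_apply, Fin.sum_univ_two]
    fin_cases i <;> fin_cases j <;> simp_all

lemma pow_entry_nonneg (M : Matrix (Fin 2) (Fin 2) ℝ) (h : ∀ i j, 0 ≤ M i j) (n : ℕ) :
    ∀ i j, 0 ≤ (M ^ n) i j := by
  induction n with
  | zero => intro i j; by_cases hij : i = j <;> simp [Matrix.one_apply, hij]
  | succ n ih =>
    intro i j
    rw [pow_succ, Matrix.mul_apply]
    exact Finset.sum_nonneg fun k _ => mul_nonneg (ih i k) (h k j)

/-- If `M` has nonneg entries and strictly positive off-diagonal entries, then `exp M` is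
entrywise strictly positive. -/
lemma exp_pos_of_nonneg (M : Matrix (Fin 2) (Fin 2) ℝ) (h0 : ∀ i j, 0 ≤ M i j)
    (hod : ∀ i j, i ≠ j → 0 < M i j) (i j : Fin 2) : 0 < exp M i j := by
  rw [exp_entry]
  have hnn : ∀ n : ℕ, 0 ≤ ((n ! : ℝ))⁻¹ * (M ^ n) i j := fun n =>
    mul_nonneg (by positivity) (pow_entry_nonneg M h0 n i j)
  rcases eq_or_ne i j with rfl | hij
  · have h1 : (1 : ℝ) ≤ ∑' n : ℕ, ((n ! : ℝ))⁻¹ * (M ^ n) i i := by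
      have := Summable.le_tsum (summable_entry M i i) 0 (fun m _ => hnn m)
      simpa using this
    linarith
  · have h1 : ((1 ! : ℝ))⁻¹ * (M ^ 1) i j ≤ ∑' n : ℕ, ((n ! : ℝ))⁻¹ * (M ^ n) i j :=
      Summable.le_tsum (summable_entry M i j) 1 (fun m _ => hnn m)
    have : 0 < ((1 ! : ℝ))⁻¹ * (M ^ 1) i j := by simpa using hod i j hij
    linarith

lemma exp_smul_one (c : ℝ) :
    exp (c • (1 : Matrix (Fin 2) (Fin 2) ℝ)) = Real.exp c • 1 := by
  ext i j
  rw [exp_entry]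
  have : ∀ n : ℕ, (c • (1 : Matrix (Fin 2) (Fin 2) ℝ)) ^ n = c ^ n • 1 := fun n => by
    rw [smul_pow, one_pow]
  simp_rw [this, Matrix.smul_apply, smul_eq_mul]
  rcases eq_or_ne i j with rfl | hij
  · simp only [Matrix.one_apply_eq, mul_one]
    rw [Real.exp_eq_exp_ℝ, exp_eq_tsum ℝ]
    simp [smul_eq_mul]
  · simp [Matrix.one_apply_ne hij]

/-- Sufficiency: positive off-diagonal entries give a strongly positive semigroup. -/
lemma strongly_pos_of_offdiag (A : Matrix (Fin 2) (Fin 2) ℝ) (h01 : 0 < A 0 1)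
    (h10 : 0 < A 1 0) (t : ℝ) (ht : 0 < t) (i j : Fin 2) : 0 < exp (t • A) i j := by
  set M := t • A with hM
  set c : ℝ := |M 0 0| + |M 1 1| with hc
  set B := M + c • (1 : Matrix (Fin 2) (Fin 2) ℝ) with hB
  have e01 : M 0 1 = t * A 0 1 := rfl
  have e10 : M 1 0 = t * A 1 0 := rfl
  have hc0 : -M 0 0 ≤ c := by
    rw [hc]; linarith [neg_abs_le (M 0 0), abs_nonneg (M 1 1)]
  have hc1 : -M 1 1 ≤ c := by
    rw [hc]; linarith [neg_abs_le (M 1 1), abs_nonneg (M 0 0)]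
  have hb00 : B 0 0 = M 0 0 + c := by
    rw [hB]; simp [Matrix.one_apply]
  have hb11 : B 1 1 = M 1 1 + c := by
    rw [hB]; simp [Matrix.one_apply]
  have hb01 : B 0 1 = M 0 1 := by
    rw [hB]; simp [Matrix.one_apply]
  have hb10 : B 1 0 = M 1 0 := by
    rw [hB]; simp [Matrix.one_apply]
  have hB01 : 0 < B 0 1 := by rw [hb01, e01]; exact mul_pos ht h01
  have hB10 : 0 < B 1 0 := by rw [hb10, e10]; exact mul_pos ht h10
  have hBnn : ∀ i j, 0 ≤ B i j := by
    simp only [Fin.forall_fin_two]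
    exact ⟨⟨by rw [hb00]; linarith, hB01.le⟩, hB10.le, by rw [hb11]; linarith⟩
  have hBod : ∀ i j, i ≠ j → 0 < B i j := by
    simp only [Fin.forall_fin_two]
    exact ⟨⟨fun h => absurd rfl h, fun _ => hB01⟩, fun _ => hB10, fun h => absurd rfl h⟩
  have hMB : M = B + (-c) • (1 : Matrix (Fin 2) (Fin 2) ℝ) := by
    rw [hB]; module
  have hcomm : Commute B ((-c) • (1 : Matrix (Fin 2) (Fin 2) ℝ)) :=
    ((Commute.one_right B).smul_right (-c))
  have hsplit : exp M = Real.exp (-c) • exp B := by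
    rw [hMB, Matrix.exp_add_of_commute _ _ hcomm, exp_smul_one, mul_smul_comm, mul_one]
  rw [hsplit]
  have := exp_pos_of_nonneg B hBnn hBod i j
  have hep : 0 < Real.exp (-c) := Real.exp_pos _
  simpa [Matrix.smul_apply, smul_eq_mul] using mul_pos hep this

/-- Necessity: strong positivity forces positive off-diagonal entries. -/
lemma offdiag_pos_of_strongly_pos (A : Matrix (Fin 2) (Fin 2) ℝ)
    (h : ∀ t : ℝ, 0 < t → ∀ i j, 0 < exp (t • A) i j) (i j : Fin 2) (hij : i ≠ j) :
    0 < A i j := by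
  letI : NormedRing (Matrix (Fin 2) (Fin 2) ℝ) := Matrix.linftyOpNormedRing
  letI : NormedAlgebra ℝ (Matrix (Fin 2) (Fin 2) ℝ) := Matrix.linftyOpNormedAlgebra
  -- A i j ≠ 0:
  have hne : A i j ≠ 0 := by
    intro h0
    have hz : exp ((1 : ℝ) • A) i j = 0 := by
      rw [one_smul, exp_entry]
      have hzn : ∀ n : ℕ, ((n ! : ℝ))⁻¹ * (A ^ n) i j = 0 := fun n => by
        rw [pow_entry_zero _ i j hij h0 n, mul_zero]
      simp only [hzn]
      exact tsum_zero
    exact absurd hz (ne_of_gt (h 1 one_pos i j))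
  -- A i j ≥ 0 via derivative at 0:
  have hd : HasDerivAt (fun u : ℝ => exp (u • A)) (exp ((0:ℝ) • A) * A) 0 :=
    hasDerivAt_exp_smul_const A (0:ℝ)
  have hd' : HasDerivAt (fun u : ℝ => exp (u • A)) A 0 := by
    simpa using hd
  have hg : HasDerivAt (fun u : ℝ => exp (u • A) i j) (A i j) 0 := by
    have := (entryCLM i j).hasFDerivAt.comp_hasDerivAt 0 hd'
    exact this
  have hslope : Filter.Tendsto (slope (fun u : ℝ => exp (u • A) i j) 0)
      (nhdsWithin 0 (Set.Ioi 0)) (nhds (A i j)) :=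
    (hasDerivAt_iff_tendsto_slope.mp hg).mono_left
      (nhdsWithin_mono 0 (fun x hx => ne_of_gt hx))
  have hge : 0 ≤ A i j := by
    refine ge_of_tendsto hslope ?_
    filter_upwards [self_mem_nhdsWithin] with x hx
    have hx' : (0:ℝ) < x := hx
    have h0 : exp ((0:ℝ) • A) i j = 0 := by
      simp [Matrix.one_apply_ne hij]
    have hval : slope (fun u : ℝ => exp (u • A) i j) 0 x = exp (x • A) i j / x := by
      simp [slope_def_field, h0, Matrix.one_apply_ne hij]
    rw [hval]
    exact (div_pos (h x hx' i j) hx').le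
  exact lt_of_le_of_ne hge (Ne.symm hne)

/-- **Corollary 4.6.** The set of real `2 × 2` matrices generating a strongly positive
semigroup `(e^{tA})_{t ≥ 0}` is open. -/
theorem isOpen_generators_of_strongly_positive_semigroup_dim_two :
    IsOpen {A : Matrix (Fin 2) (Fin 2) ℝ |
      ∀ t : ℝ, 0 < t → ∀ i j, 0 < exp (t • A) i j} := by
  have hset : {A : Matrix (Fin 2) (Fin 2) ℝ |
      ∀ t : ℝ, 0 < t → ∀ i j, 0 < exp (t • A) i j} =
      {A : Matrix (Fin 2) (Fin 2) ℝ | 0 < A 0 1} ∩ {A | 0 < A 1 0} := by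
    ext A
    constructor
    · intro h
      exact ⟨offdiag_pos_of_strongly_pos A h 0 1 (by decide),
        offdiag_pos_of_strongly_pos A h 1 0 (by decide)⟩
    · rintro ⟨h01, h10⟩ t ht i j
      exact strongly_pos_of_offdiag A h01 h10 t ht i j
  rw [hset]
  exact (isOpen_lt continuous_const (continuous_id.matrix_elem 0 1)).inter
    (isOpen_lt continuous_const (continuous_id.matrix_elem 1 0))
end

section
/- Fix an integer d ≥ 1 and let A be a real d × d matrix such that the semigroup (e^{tA})_{t≥0} is eventually strongly positive, i.e., there exists t0 ≥ 0 such that all entries of e^{tA} are strictly positive for all t ≥ t0. Then the following assertions are equivalent: (i) for every entrywise nonnegative real d × d matrix B there exists t0 ≥ 0 such that all entries of e^{t(A+B)} are nonnegative for all t ≥ t0; (ii) for every entrywise nonnegative real d × d matrix B of rank one there exists t0 ≥ 0 such that all entries of e^{t(A+B)} are nonnegative for all t ≥ t0; (iii) for every t ≥ 0 all entries of e^{tA} are nonnegative. -/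
open NormedSpace

variable {d : ℕ}

lemma entry_hasDerivAt (M : Matrix (Fin d) (Fin d) ℝ) (t : ℝ) (i j : Fin d) :
    HasDerivAt (fun u : ℝ => exp (u • M) i j) ((M * exp (t • M)) i j) t := by
  letI : SeminormedRing (Matrix (Fin d) (Fin d) ℝ) := Matrix.linftyOpSemiNormedRing
  letI : NormedRing (Matrix (Fin d) (Fin d) ℝ) := Matrix.linftyOpNormedRing
  letI : NormedAlgebra ℝ (Matrix (Fin d) (Fin d) ℝ) := Matrix.linftyOpNormedAlgebra
  have h := hasDerivAt_exp_smul_const' M t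
  exact ((Matrix.entryLinearMap ℝ ℝ i j).toContinuousLinearMap.hasFDerivAt.comp_hasDerivAt t h :)

lemma exp_entry_nonneg (N : Matrix (Fin d) (Fin d) ℝ) (hN : ∀ i j, 0 ≤ N i j) (i j : Fin d) :
    0 ≤ exp N i j := by
  letI : SeminormedRing (Matrix (Fin d) (Fin d) ℝ) := Matrix.linftyOpSemiNormedRing
  letI : NormedRing (Matrix (Fin d) (Fin d) ℝ) := Matrix.linftyOpNormedRing
  letI : NormedAlgebra ℝ (Matrix (Fin d) (Fin d) ℝ) := Matrix.linftyOpNormedAlgebra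
  have hpow : ∀ (n : ℕ) (a b : Fin d), 0 ≤ (N ^ n) a b := by
    intro n
    induction n with
    | zero => intro a b; by_cases h : a = b <;> simp [pow_zero, Matrix.one_apply, h]
    | succ n ih =>
      intro a b
      rw [pow_succ, Matrix.mul_apply]
      exact Finset.sum_nonneg fun k _ => mul_nonneg (ih a k) (hN k b)
  have hs : HasSum (fun n : ℕ => ((n.factorial : ℝ))⁻¹ • N ^ n) (exp N) :=
    exp_series_hasSum_exp' N
  have hs2 := ((Matrix.entryLinearMap ℝ ℝ i j).toContinuousLinearMap :
      Matrix (Fin d) (Fin d) ℝ →L[ℝ] ℝ).hasSum hs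
  refine hs2.nonneg fun n => ?_
  have : 0 ≤ (((n.factorial : ℝ))⁻¹ • N ^ n) i j := by
    rw [Matrix.smul_apply]
    exact smul_nonneg (by positivity) (hpow n i j)
  exact this

lemma metzler_exp_nonneg (M : Matrix (Fin d) (Fin d) ℝ)
    (hM : ∀ i j, i ≠ j → 0 ≤ M i j) (t : ℝ) (ht : 0 ≤ t) (i j : Fin d) :
    0 ≤ exp (t • M) i j := by
  set c : ℝ := ∑ k, |M k k| with hc
  have hc0 : 0 ≤ c := Finset.sum_nonneg fun k _ => abs_nonneg _
  have hMc : ∀ a b, 0 ≤ (t • (M + c • (1 : Matrix (Fin d) (Fin d) ℝ))) a b := by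
    intro a b
    refine mul_nonneg ht ?_
    rcases eq_or_ne a b with rfl | hab
    · have h1 : |M a a| ≤ c :=
        Finset.single_le_sum (f := fun k => |M k k|) (fun k _ => abs_nonneg _)
          (Finset.mem_univ a)
      have h2 := neg_abs_le (M a a)
      simp only [Matrix.add_apply, Matrix.smul_apply, Matrix.one_apply_eq, smul_eq_mul, mul_one]
      linarith
    · simpa [Matrix.add_apply, Matrix.smul_apply, Matrix.one_apply_ne hab] using hM a b hab
  have hsplit : t • (M + c • (1 : Matrix (Fin d) (Fin d) ℝ))
      = t • M + (t * c) • (1 : Matrix (Fin d) (Fin d) ℝ) := by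
    rw [smul_add, smul_smul]
  have hcomm : Commute (t • M) ((t * c) • (1 : Matrix (Fin d) (Fin d) ℝ)) :=
    ((Commute.one_right (t • M)).smul_right _)
  have key : exp (t • (M + c • (1 : Matrix (Fin d) (Fin d) ℝ)))
      = exp (t • M) * exp ((t * c) • (1 : Matrix (Fin d) (Fin d) ℝ)) := by
    rw [hsplit, Matrix.exp_add_of_commute _ _ hcomm]
  have hone : exp ((t * c) • (1 : Matrix (Fin d) (Fin d) ℝ))
      = Real.exp (t * c) • (1 : Matrix (Fin d) (Fin d) ℝ) := by
    have h1 : ((t * c) • (1 : Matrix (Fin d) (Fin d) ℝ))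
        = Matrix.diagonal (fun _ => t * c) := by
      ext a b
      rcases eq_or_ne a b with rfl | hab
      · simp
      · simp [Matrix.one_apply_ne hab, Matrix.diagonal_apply_ne _ hab]
    rw [h1, Matrix.exp_diagonal]
    ext a b
    rcases eq_or_ne a b with rfl | hab
    · simp [← Real.exp_eq_exp_ℝ]
    · simp [Matrix.one_apply_ne hab, Matrix.diagonal_apply_ne _ hab]
  have hback : exp (t • M)
      = Real.exp (-(t * c)) • exp (t • (M + c • (1 : Matrix (Fin d) (Fin d) ℝ))) := by
    rw [key, hone]
    ext a b
    simp [Matrix.smul_apply, Real.exp_neg, mul_comm]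
  rw [hback, Matrix.smul_apply]
  exact mul_nonneg (Real.exp_nonneg _) (exp_entry_nonneg _ hMc i j)

lemma semigroup_pos_metzler (M : Matrix (Fin d) (Fin d) ℝ)
    (h : ∀ t : ℝ, 0 ≤ t → ∀ i j, 0 ≤ exp (t • M) i j) (i j : Fin d) (hij : i ≠ j) :
    0 ≤ M i j := by
  have hd := entry_hasDerivAt M 0 i j
  have h0 : (M * exp ((0:ℝ) • M)) i j = M i j := by
    simp [exp_zero]
  rw [h0] at hd
  have hslope := hasDerivAt_iff_tendsto_slope.mp hd
  have hslope' : Filter.Tendsto (slope (fun u : ℝ => exp (u • M) i j) 0)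
      (nhdsWithin 0 (Set.Ioi 0)) (nhds (M i j)) :=
    hslope.mono_left (nhdsWithin_mono _ (fun x hx => ne_of_gt hx))
  refine ge_of_tendsto hslope' ?_
  filter_upwards [self_mem_nhdsWithin] with u hu
  have hu0 : (0:ℝ) < u := hu
  have hx0 : exp ((0:ℝ) • M) i j = 0 := by
    simp [exp_zero, Matrix.one_apply_ne hij]
  have hfu : 0 ≤ exp (u • M) i j := h u hu0.le i j
  rw [slope_def_field, hx0]
  have : (0:ℝ) < u - 0 := by linarith
  exact div_nonneg (by linarith) this.le

lemma consts (a β : ℝ) (ha1 : 1 ≤ a) (hβ : 0 < β) :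
    ∃ c ε : ℝ, 0 < c ∧ 0 < ε ∧ c * ε = 2*a ∧ a * ε ≤ 1/4 ∧ ε ≤ 1/4 ∧
      a * ε ≤ β/2 ∧ 8*a*a ≤ c := by
  have ha0 : 0 < a := by linarith
  refine ⟨8*a*a + 4*a*a/β, 2*a/(8*a*a + 4*a*a/β), ?_, ?_, ?_, ?_, ?_, ?_, ?_⟩
  · positivity
  · positivity
  · field_simp
  · rw [mul_div_assoc', div_le_iff₀ (by positivity)]
    have : 0 ≤ 4*a*a/β := by positivity
    nlinarith
  · rw [div_le_iff₀ (by positivity)]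
    have : 0 ≤ 4*a*a/β := by positivity
    nlinarith
  · rw [mul_div_assoc', div_le_div_iff₀ (by positivity) two_pos]
    have h1 : 4*a*a = β * (4*a*a/β) := by field_simp
    nlinarith [h1, mul_nonneg (by positivity : (0:ℝ) ≤ 8*a*a) hβ.le]
  · have : 0 ≤ 4*a*a/β := by positivity
    linarith


lemma arith1 (a c ε v w I : ℝ) (ha1 : 1 ≤ a) (hcε : c*ε = 2*a) (hεa : a*ε ≤ 1/4)
    (hD : 0 < c - 2*a) (hI0 : 0 ≤ I) (h1 : v ≤ (5/4)*a*I) (h2 : (c-2*a)*I ≤ w - 1)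
    (hw : 1 ≤ w) : v < ε * w := by
  have ha0 : 0 < a := by linarith
  have hεc : (3/2)*a ≤ ε*(c - 2*a) := by nlinarith
  have t1 : (c - 2*a) * v ≤ (c - 2*a) * ((5/4)*a*I) := mul_le_mul_of_nonneg_left h1 hD.le
  have t2 : (5/4)*a*((c - 2*a) * I) ≤ (5/4)*a*(w - 1) := mul_le_mul_of_nonneg_left h2 (by positivity)
  have t3 : (5/4)*a*(w - 1) < (3/2)*a*w := by nlinarith
  have t4 : (3/2)*a*w ≤ ε*(c - 2*a)*w := mul_le_mul_of_nonneg_right hεc (by linarith)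
  have t5 : (c - 2*a) * v < (c - 2*a) * (ε * w) := by nlinarith
  exact lt_of_mul_lt_mul_left t5 hD.le

lemma key_neg (A : Matrix (Fin d) (Fin d) ℝ) (p q : Fin d) (hpq : p ≠ q) (hneg : A p q < 0) :
    ∃ c : ℝ, 0 < c ∧ ∀ t : ℝ, 0 < t →
      exp (t • (A + Matrix.single q q c)) p q < 0 := by
  classical
  obtain ⟨a, ha1, hrow, hsub⟩ : ∃ a : ℝ, 1 ≤ a ∧ (∀ i, (∑ j, |A i j|) ≤ a) ∧
      (∑ j ∈ Finset.univ.erase q, ∑ k, |A j k|) ≤ a := by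
    refine ⟨1 + ∑ i, ∑ j, |A i j|, ?_, ?_, ?_⟩
    · have : (0:ℝ) ≤ ∑ i, ∑ j, |A i j| :=
        Finset.sum_nonneg fun i _ => Finset.sum_nonneg fun j _ => abs_nonneg _
      linarith
    · intro i
      have : (∑ j, |A i j|) ≤ ∑ i, ∑ j, |A i j| :=
        Finset.single_le_sum (f := fun i => ∑ j, |A i j|)
          (fun i _ => Finset.sum_nonneg fun j _ => abs_nonneg _) (Finset.mem_univ i)
      linarith
    · have : (∑ j ∈ Finset.univ.erase q, ∑ k, |A j k|) ≤ ∑ i, ∑ j, |A i j| :=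
        Finset.sum_le_sum_of_subset_of_nonneg (Finset.erase_subset _ _)
          (fun i _ _ => Finset.sum_nonneg fun j _ => abs_nonneg _)
      linarith
  have ha0 : 0 < a := by linarith
  have hβ : 0 < -A p q := by linarith
  obtain ⟨c, ε, hc0, hε0, hcε, hεa, hε14, hεβ, hc8⟩ := consts a (-A p q) ha1 hβ
  refine ⟨c, hc0, ?_⟩
  set M : Matrix (Fin d) (Fin d) ℝ := A + Matrix.single q q c with hMdef
  have hMoff : ∀ j k, j ≠ q → M j k = A j k := by
    intro j k hj
    show (A + Matrix.single q q c) j k = A j k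
    rw [Matrix.add_apply,
      Matrix.single_apply_of_ne q q c j k (fun h => hj h.1.symm), add_zero]
  have hMqq : M q q = A q q + c := by
    show (A + Matrix.single q q c) q q = A q q + c
    rw [Matrix.add_apply, Matrix.single_apply_same]
  have hMqk : ∀ k, k ≠ q → M q k = A q k := by
    intro k hk
    show (A + Matrix.single q q c) q k = A q k
    rw [Matrix.add_apply,
      Matrix.single_apply_of_ne q q c q k (fun h => hk h.2.symm), add_zero]
  set x : Fin d → ℝ → ℝ := fun j t => exp (t • M) j q with hxdef
  have hx : ∀ j t, HasDerivAt (x j) (∑ k, M j k * x k t) t := by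
    intro j t
    have h := entry_hasDerivAt M t j q
    rwa [Matrix.mul_apply] at h
  have hcont : ∀ j, Continuous (x j) :=
    fun j => continuous_iff_continuousAt.mpr fun t => (hx j t).continuousAt
  have hx0 : ∀ j, x j 0 = if j = q then 1 else 0 := by
    intro j
    simp only [hxdef, zero_smul, exp_zero]
    exact Matrix.one_apply
  set u : ℝ → ℝ := x q with hudef
  set V : ℝ → ℝ := fun t => ∑ j ∈ Finset.univ.erase q, |x j t| with hVdef
  have hVcont : Continuous V := continuous_finset_sum _ fun j _ => (hcont j).abs
  have hucont : Continuous u := hcont q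
  have hV0 : ∀ t, 0 ≤ V t := fun t => Finset.sum_nonneg fun j _ => abs_nonneg _
  have hVmem : ∀ k, k ≠ q → ∀ t, |x k t| ≤ V t := by
    intro k hk t
    exact Finset.single_le_sum (f := fun j => |x j t|) (fun j _ => abs_nonneg _)
      (Finset.mem_erase.mpr ⟨hk, Finset.mem_univ _⟩)
  have hu0 : u 0 = 1 := by rw [hudef]; rw [hx0 q]; simp
  have hV00 : V 0 = 0 := by
    rw [hVdef]
    refine Finset.sum_eq_zero fun j hj => ?_
    rw [hx0 j, if_neg (Finset.mem_erase.mp hj).1, abs_zero]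
  have hginteg : ∀ j t₁ t₂, IntervalIntegrable (fun s => ∑ k, M j k * x k s)
      MeasureTheory.volume t₁ t₂ :=
    fun j t₁ t₂ => (continuous_finset_sum _ fun k _ =>
      continuous_const.mul (hcont k)).intervalIntegrable _ _
  have hftc : ∀ j t, x j t = x j 0 + ∫ s in (0:ℝ)..t, ∑ k, M j k * x k s := by
    intro j t
    have h := intervalIntegral.integral_eq_sub_of_hasDerivAt
      (f := x j) (f' := fun s => ∑ k, M j k * x k s)
      (fun s _ => hx j s) (hginteg j 0 t)
    linarith [h]
  -- pointwise estimates under the bootstrap hypothesis P s : V s ≤ ε * u s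
  have hu_nonneg : ∀ s, V s ≤ ε * u s → 0 ≤ u s := by
    intro s hs
    nlinarith [hV0 s]
  have habsx : ∀ s, V s ≤ ε * u s → ∀ k, |x k s| ≤ u s + V s := by
    intro s hs k
    rcases eq_or_ne k q with rfl | hk
    · rw [abs_of_nonneg (hu_nonneg s hs)]
      exact le_add_of_nonneg_right (hV0 s)
    · exact (hVmem k hk s).trans (le_add_of_nonneg_left (hu_nonneg s hs))
  -- bound for a single row sum, j arbitrary
  have hrowbound : ∀ j s, V s ≤ ε * u s →
      |∑ k, A j k * x k s| ≤ (∑ k, |A j k|) * (u s + V s) := by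
    intro j s hs
    calc |∑ k, A j k * x k s| ≤ ∑ k, |A j k * x k s| := Finset.abs_sum_le_sum_abs _ _
      _ ≤ ∑ k, |A j k| * (u s + V s) := by
          refine Finset.sum_le_sum fun k _ => ?_
          rw [abs_mul]
          exact mul_le_mul_of_nonneg_left (habsx s hs k) (abs_nonneg _)
      _ = (∑ k, |A j k|) * (u s + V s) := by rw [Finset.sum_mul]
  have hD : 0 < c - 2*a := by nlinarith
  -- split of the q-row sum
  have hsplitq : ∀ s, (∑ k, M q k * x k s) = c * u s + ∑ k, A q k * x k s := by
    intro s
    have h1 : ∀ k ∈ Finset.univ, M q k * x k s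
        = A q k * x k s + (if k = q then c * u s else 0) := by
      intro k _
      rcases eq_or_ne k q with rfl | hk
      · rw [hMqq, if_pos rfl]
        show (A k k + c) * x k s = A k k * x k s + c * x k s
        ring
      · rw [hMqk k hk, if_neg hk, add_zero]
    rw [Finset.sum_congr rfl h1, Finset.sum_add_distrib,
      Finset.sum_ite_eq' Finset.univ q (fun _ => c * u s), if_pos (Finset.mem_univ q)]
    ring
  -- lower bound for the q-row integrand
  have huglow : ∀ s, V s ≤ ε * u s → (c - 2*a) * u s ≤ ∑ k, M q k * x k s := by
    intro s hs
    have habs : |∑ k, A q k * x k s| ≤ a * (u s + V s) := by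
      refine (hrowbound q s hs).trans ?_
      have h1 : 0 ≤ u s + V s := by
        have := hu_nonneg s hs; have := hV0 s; linarith
      exact mul_le_mul_of_nonneg_right (hrow q) h1
    have h5 : a * (u s + V s) ≤ 2*a*u s := by
      have h2 := mul_le_mul_of_nonneg_left hs ha0.le
      have h3 := mul_le_mul_of_nonneg_right hεa (hu_nonneg s hs)
      have h4 := hu_nonneg s hs
      nlinarith [mul_nonneg (by linarith : (0:ℝ) ≤ a - 1/4) (hu_nonneg s hs)]
    have h6 := neg_abs_le (∑ k, A q k * x k s)
    rw [hsplitq s]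
    linarith
  -- upper bound for the sum of absolute values of the non-q rows
  have hVrow : ∀ s, V s ≤ ε * u s →
      (∑ j ∈ Finset.univ.erase q, |∑ k, M j k * x k s|) ≤ (5/4)*a*u s := by
    intro s hs
    have h1 : ∀ j ∈ Finset.univ.erase q,
        |∑ k, M j k * x k s| ≤ (∑ k, |A j k|) * (u s + V s) := by
      intro j hj
      have hjq := (Finset.mem_erase.mp hj).1
      have : (∑ k, M j k * x k s) = ∑ k, A j k * x k s :=
        Finset.sum_congr rfl fun k _ => by rw [hMoff j k hjq]
      rw [this]
      exact hrowbound j s hs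
    have h2 : (∑ j ∈ Finset.univ.erase q, |∑ k, M j k * x k s|)
        ≤ (∑ j ∈ Finset.univ.erase q, ∑ k, |A j k|) * (u s + V s) := by
      rw [Finset.sum_mul]
      exact Finset.sum_le_sum h1
    have h3 : 0 ≤ u s + V s := by
      have := hu_nonneg s hs; have := hV0 s; linarith
    have h4 : (∑ j ∈ Finset.univ.erase q, ∑ k, |A j k|) * (u s + V s) ≤ a * (u s + V s) :=
      mul_le_mul_of_nonneg_right hsub h3
    have h5 : a * (u s + V s) ≤ (5/4)*a*u s := by
      have h2' := mul_le_mul_of_nonneg_left hs ha0.le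
      have h3' := mul_le_mul_of_nonneg_right hεa (hu_nonneg s hs)
      nlinarith [mul_nonneg (by linarith : (0:ℝ) ≤ a - 1) (hu_nonneg s hs)]
    linarith
  -- under the bootstrap hypothesis on [0,T], u ≥ 1 on [0,T]
  have hu1 : ∀ T, 0 ≤ T → (∀ s ∈ Set.Icc (0:ℝ) T, V s ≤ ε * u s) →
      ∀ s ∈ Set.Icc (0:ℝ) T, 1 ≤ u s := by
    intro T hT hP s hs
    obtain ⟨hs0, hsT⟩ := hs
    have hint : 0 ≤ ∫ r in (0:ℝ)..s, ∑ k, M q k * x k r := by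
      refine intervalIntegral.integral_nonneg hs0 fun r hr => ?_
      have hrP : V r ≤ ε * u r := hP r ⟨hr.1, hr.2.trans hsT⟩
      have := huglow r hrP
      have := hu_nonneg r hrP
      nlinarith
    have := hftc q s
    rw [hx0 q, if_pos rfl] at this
    show 1 ≤ x q s
    rw [this]
    linarith
  -- integral bound for u
  have hIu : ∀ T, 0 ≤ T → (∀ s ∈ Set.Icc (0:ℝ) T, V s ≤ ε * u s) →
      (c - 2*a) * (∫ s in (0:ℝ)..T, u s) ≤ u T - 1 := by
    intro T hT hP
    have h1 : (∫ s in (0:ℝ)..T, (c - 2*a) * u s) ≤ ∫ s in (0:ℝ)..T, ∑ k, M q k * x k s := by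
      refine intervalIntegral.integral_mono_on hT
        ((continuous_const.mul hucont).intervalIntegrable _ _) (hginteg q 0 T)
        fun s hs => huglow s (hP s hs)
    rw [intervalIntegral.integral_const_mul] at h1
    have h2 := hftc q T
    rw [hx0 q, if_pos rfl] at h2
    have : u T = 1 + ∫ s in (0:ℝ)..T, ∑ k, M q k * x k s := h2
    linarith
  -- bound for V T
  have hVT : ∀ T, 0 ≤ T → (∀ s ∈ Set.Icc (0:ℝ) T, V s ≤ ε * u s) →
      V T ≤ (5/4)*a * ∫ s in (0:ℝ)..T, u s := by
    intro T hT hP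
    have h1 : ∀ j ∈ Finset.univ.erase q,
        |x j T| ≤ ∫ s in (0:ℝ)..T, |∑ k, M j k * x k s| := by
      intro j hj
      have hjq := (Finset.mem_erase.mp hj).1
      have h2 := hftc j T
      rw [hx0 j, if_neg hjq, zero_add] at h2
      rw [h2]
      exact intervalIntegral.abs_integral_le_integral_abs hT
    have h3 : V T ≤ ∑ j ∈ Finset.univ.erase q, ∫ s in (0:ℝ)..T, |∑ k, M j k * x k s| :=
      Finset.sum_le_sum h1
    have h4 : (∑ j ∈ Finset.univ.erase q, ∫ s in (0:ℝ)..T, |∑ k, M j k * x k s|)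
        = ∫ s in (0:ℝ)..T, ∑ j ∈ Finset.univ.erase q, |∑ k, M j k * x k s| := by
      rw [intervalIntegral.integral_finset_sum]
      intro j _
      exact ((continuous_finset_sum _ fun k _ =>
        continuous_const.mul (hcont k)).abs).intervalIntegrable _ _
    have h5 : (∫ s in (0:ℝ)..T, ∑ j ∈ Finset.univ.erase q, |∑ k, M j k * x k s|)
        ≤ ∫ s in (0:ℝ)..T, (5/4)*a*u s := by
      refine intervalIntegral.integral_mono_on hT ?_
        ((continuous_const.mul hucont).intervalIntegrable _ _)
        fun s hs => hVrow s (hP s hs)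
      exact (continuous_finset_sum _ fun j _ => (continuous_finset_sum _ fun k _ =>
        continuous_const.mul (hcont k)).abs).intervalIntegrable _ _
    rw [intervalIntegral.integral_const_mul] at h5
    calc V T ≤ _ := h3
      _ = _ := h4
      _ ≤ _ := h5
  -- strict inequality at the endpoint
  have hstrict : ∀ T, 0 ≤ T → (∀ s ∈ Set.Icc (0:ℝ) T, V s ≤ ε * u s) →
      V T < ε * u T := by
    intro T hT hP
    obtain ⟨I, hIdef⟩ : ∃ I : ℝ, I = ∫ s in (0:ℝ)..T, u s := ⟨_, rfl⟩
    have hI0 : 0 ≤ I := by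
      rw [hIdef]
      exact intervalIntegral.integral_nonneg hT fun s hs => by linarith [hu1 T hT hP s hs]
    have h1 : V T ≤ (5/4)*a*I := by rw [hIdef]; exact hVT T hT hP
    have h2 : (c - 2*a) * I ≤ u T - 1 := by rw [hIdef]; exact hIu T hT hP
    have huT : 1 ≤ u T := hu1 T hT hP T ⟨hT, le_refl T⟩
    exact arith1 a c ε (V T) (u T) I ha1 hcε hεa hD hI0 h1 h2 huT
  -- continuous induction: the bootstrap inequality holds for all nonnegative times
  have hmain : ∀ t, 0 ≤ t → V t ≤ ε * u t := by
    by_contra hbad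
    push_neg at hbad
    obtain ⟨t₁, ht₁0, ht₁⟩ := hbad
    set Bad : Set ℝ := {t : ℝ | 0 ≤ t ∧ ε * u t < V t} with hBad
    have hne : Bad.Nonempty := ⟨t₁, ht₁0, ht₁⟩
    have hbdd : BddBelow Bad := ⟨0, fun b hb => hb.1⟩
    set T := sInf Bad with hTdef
    have hT0 : 0 ≤ T := le_csInf hne fun b hb => hb.1
    have hTlb : ∀ b ∈ Bad, T ≤ b := fun b hb => csInf_le hbdd hb
    have hless : ∀ s, 0 ≤ s → s < T → V s ≤ ε * u s := by
      intro s hs0 hsT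
      by_contra h
      push_neg at h
      exact absurd (hTlb s ⟨hs0, h⟩) (not_le.mpr hsT)
    have hPT : ∀ s ∈ Set.Icc (0:ℝ) T, V s ≤ ε * u s := by
      intro s hs
      obtain ⟨hs0, hsT⟩ := hs
      rcases lt_or_eq_of_le hsT with h | rfl
      · exact hless s hs0 h
      · -- s = T
        rcases eq_or_lt_of_le hT0 with h0 | h0
        · rw [← h0, hV00, hu0]
          linarith
        · -- T > 0 : take the limit from the left
          have hlim : Filter.Tendsto (fun r => ε * u r - V r) (nhdsWithin T (Set.Iio T))
              (nhds (ε * u T - V T)) :=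
            ((continuous_const.mul hucont).sub hVcont).continuousAt.mono_left
              nhdsWithin_le_nhds
          have hev : ∀ᶠ r in nhdsWithin T (Set.Iio T), 0 ≤ ε * u r - V r := by
            filter_upwards [Ioo_mem_nhdsLT_of_mem (Set.mem_Ioc.mpr ⟨h0, le_refl T⟩)]
              with r hr
            have := hless r hr.1.le hr.2
            linarith
          have := ge_of_tendsto hlim hev
          linarith
    have hVTstrict := hstrict T hT0 hPT
    -- find an open ball around T where the strict inequality persists
    have hgcont : Continuous fun t => ε * u t - V t := (continuous_const.mul hucont).sub hVcont
    have hopen : IsOpen {t : ℝ | 0 < ε * u t - V t} := isOpen_lt continuous_const hgcont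
    have hTmem : T ∈ {t : ℝ | 0 < ε * u t - V t} := by
      simp only [Set.mem_setOf_eq]; linarith
    obtain ⟨δ, hδ0, hball⟩ := Metric.isOpen_iff.mp hopen T hTmem
    have hlb : T + δ/2 ≤ T := by
      refine le_csInf hne fun b hb => ?_
      by_contra hcon
      push_neg at hcon
      have hbT : T ≤ b := hTlb b hb
      have hbmem : b ∈ Metric.ball T δ := by
        rw [Metric.mem_ball, Real.dist_eq, abs_of_nonneg (by linarith)]
        linarith
      have := hball hbmem
      simp only [Set.mem_setOf_eq] at this
      have := hb.2
      linarith
    linarith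
  -- conclusion: the (p,q) entry is strictly negative for positive times
  intro t ht
  have hPt : ∀ s ∈ Set.Icc (0:ℝ) t, V s ≤ ε * u s := fun s hs => hmain s hs.1
  have hu1t := hu1 t ht.le hPt
  have hgp : ∀ s ∈ Set.Icc (0:ℝ) t, (∑ k, M p k * x k s) ≤ A p q / 2 := by
    intro s hs
    have hsP := hmain s hs.1
    have h1 : (∑ k, M p k * x k s) = ∑ k, A p k * x k s :=
      Finset.sum_congr rfl fun k _ => by rw [hMoff p k hpq]
    have h2 : (∑ k, A p k * x k s) = A p q * u s + ∑ k ∈ Finset.univ.erase q, A p k * x k s := by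
      rw [← Finset.add_sum_erase _ _ (Finset.mem_univ q)]
    have h3 : (∑ k ∈ Finset.univ.erase q, A p k * x k s) ≤ a * V s := by
      calc (∑ k ∈ Finset.univ.erase q, A p k * x k s)
          ≤ ∑ k ∈ Finset.univ.erase q, |A p k| * V s := by
            refine Finset.sum_le_sum fun k hk => ?_
            have hkq := (Finset.mem_erase.mp hk).1
            calc A p k * x k s ≤ |A p k * x k s| := le_abs_self _
              _ = |A p k| * |x k s| := abs_mul _ _
              _ ≤ |A p k| * V s :=
                mul_le_mul_of_nonneg_left (hVmem k hkq s) (abs_nonneg _)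
        _ = (∑ k ∈ Finset.univ.erase q, |A p k|) * V s := by rw [Finset.sum_mul]
        _ ≤ a * V s := by
            refine mul_le_mul_of_nonneg_right ?_ (hV0 s)
            refine le_trans ?_ (hrow p)
            exact Finset.sum_le_sum_of_subset_of_nonneg (Finset.erase_subset _ _)
              (fun k _ _ => abs_nonneg _)
    have h4 : a * V s ≤ a * (ε * u s) := mul_le_mul_of_nonneg_left hsP ha0.le
    have h5 : a * (ε * u s) ≤ (-A p q/2) * u s := by
      have h5' := mul_le_mul_of_nonneg_right hεβ (hu_nonneg s hsP)
      calc a * (ε * u s) = a * ε * u s := (mul_assoc a ε (u s)).symm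
        _ ≤ (-A p q/2) * u s := h5'
    have hus := hu1t s hs
    have h6 : A p q * u s + (-A p q/2) * u s = (A p q/2) * u s := by ring
    have h7 : (A p q/2) * u s ≤ A p q / 2 := by
      have h7' := mul_le_mul_of_nonpos_left hus (by linarith : A p q/2 ≤ 0)
      rw [mul_one] at h7'
      exact h7'
    rw [h1, h2]
    linarith
  have h8 : x p t = ∫ s in (0:ℝ)..t, ∑ k, M p k * x k s := by
    have := hftc p t
    rw [hx0 p, if_neg hpq, zero_add] at this
    exact this
  have h9 : (∫ s in (0:ℝ)..t, ∑ k, M p k * x k s) ≤ ∫ s in (0:ℝ)..t, A p q / 2 :=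
    intervalIntegral.integral_mono_on ht.le (hginteg p 0 t)
      (continuous_const.intervalIntegrable _ _) hgp
  rw [intervalIntegral.integral_const, smul_eq_mul] at h9
  have hfin : x p t < 0 := by
    rw [h8]
    refine lt_of_le_of_lt h9 ?_
    have : t - 0 = t := by ring
    rw [this]
    exact mul_neg_of_pos_of_neg ht (by linarith)
  exact hfin

lemma rank_std_one {d : ℕ} (q : Fin d) (c : ℝ) (hc : c ≠ 0) :
    (Matrix.single q q c).rank = 1 := by
  have hdiag : Matrix.single q q c
      = Matrix.diagonal ((Pi.single q c : Fin d → ℝ)) := by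
    ext i j
    rcases eq_or_ne q i with h1 | h1
    · rcases eq_or_ne q j with h2 | h2
      · subst h1; subst h2; simp
      · subst h1
        rw [Matrix.single_apply_of_ne _ _ _ _ _ (fun h => h2 h.2),
          Matrix.diagonal_apply_ne _ h2]
    · rw [Matrix.single_apply_of_ne _ _ _ _ _ (fun h => h1 h.1)]
      rcases eq_or_ne i j with rfl | hij
      · rw [Matrix.diagonal_apply_eq, Pi.single_eq_of_ne (fun h : i = q => h1 h.symm)]
      · rw [Matrix.diagonal_apply_ne _ hij]
  rw [hdiag, Matrix.rank_diagonal]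
  have hiff : ∀ i : Fin d, ((Pi.single q c : Fin d → ℝ) i ≠ 0) ↔ i = q := by
    intro i
    constructor
    · intro h
      by_contra hiq
      exact h (Pi.single_eq_of_ne hiq _)
    · rintro rfl
      rw [Pi.single_eq_same]
      exact hc
  rw [Fintype.card_congr (Equiv.subtypeEquivRight hiff), Fintype.card_subtype_eq]

/-- **Theorem 2.3** (finite-dimensional instance). For a real `d × d` matrix `A`
generating an eventually strongly positive semigroup, the following are equivalent:
(i) for every entrywise nonnegative `B` the semigroup of `A + B` is eventually positive;
(ii) the same for every entrywise nonnegative rank-one `B`;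
(iii) the semigroup of `A` is positive. -/
theorem eventually_positive_perturbation_tfae
    (d : ℕ) (hd : 1 ≤ d) (A : Matrix (Fin d) (Fin d) ℝ)
    (hA : ∃ t₀ : ℝ, 0 ≤ t₀ ∧ ∀ t : ℝ, t₀ ≤ t → ∀ i j, 0 < exp (t • A) i j) :
    List.TFAE
      [∀ B : Matrix (Fin d) (Fin d) ℝ, (∀ i j, 0 ≤ B i j) →
          ∃ t₀ : ℝ, 0 ≤ t₀ ∧ ∀ t : ℝ, t₀ ≤ t → ∀ i j, 0 ≤ exp (t • (A + B)) i j,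
        ∀ B : Matrix (Fin d) (Fin d) ℝ, (∀ i j, 0 ≤ B i j) → B.rank = 1 →
          ∃ t₀ : ℝ, 0 ≤ t₀ ∧ ∀ t : ℝ, t₀ ≤ t → ∀ i j, 0 ≤ exp (t • (A + B)) i j,
        ∀ t : ℝ, 0 ≤ t → ∀ i j, 0 ≤ exp (t • A) i j] := by
  tfae_have 1 → 2 := by
    intro h1 B hB _
    exact h1 B hB
  tfae_have 3 → 1 := by
    intro h3 B hB
    have hAmetz : ∀ i j, i ≠ j → 0 ≤ A i j := fun i j hij =>
      semigroup_pos_metzler A h3 i j hij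
    refine ⟨0, le_refl 0, fun t ht i j => ?_⟩
    refine metzler_exp_nonneg (A + B) (fun i' j' hij' => ?_) t ht i j
    have hb := hB i' j'
    have ha := hAmetz i' j' hij'
    rw [Matrix.add_apply]
    linarith
  tfae_have 2 → 3 := by
    intro h2
    have hAmetz : ∀ i j, i ≠ j → 0 ≤ A i j := by
      intro i j hij
      by_contra hneg
      push_neg at hneg
      obtain ⟨c, hc0, hkey⟩ := key_neg A i j hij hneg
      have hBnn : ∀ a b, 0 ≤ Matrix.single j j c a b := by
        intro a b
        by_cases h : j = a ∧ j = b
        · obtain ⟨rfl, rfl⟩ := h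
          rw [Matrix.single_apply_same]
          exact hc0.le
        · rw [Matrix.single_apply_of_ne j j c a b h]
      obtain ⟨t₀, ht₀0, ht₀⟩ := h2 (Matrix.single j j c) hBnn
        (rank_std_one j c hc0.ne')
      have hnn := ht₀ (t₀ + 1) (by linarith) i j
      have hlt := hkey (t₀ + 1) (by linarith)
      linarith
    exact fun t ht i j => metzler_exp_nonneg A hAmetz t ht i j
  tfae_finish
end

section
/- Let A be the real 3 × 3 matrix with rows (−2, −1, 3), (−1, −2, 3) and (3, 3, −6). Then the semigroup (e^{tA})_{t≥0} is eventually strongly positive but not positive: there exists t0 ≥ 0 such that for every t ≥ t0 all entries of the matrix exponential e^{tA} are strictly positive, and there exists t > 0 such that e^{tA} has a strictly negative entry. -/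
open NormedSpace

namespace ExampleMatrix

noncomputable section

def S : Matrix (Fin 3) (Fin 3) ℝ := !![1,1,1; 1,-1,1; 1,0,-2]
def Sinv : Matrix (Fin 3) (Fin 3) ℝ := !![1/3,1/3,1/3; 1/2,-1/2,0; 1/6,1/6,-1/3]
def Amat : Matrix (Fin 3) (Fin 3) ℝ := !![-2, -1, 3; -1, -2, 3; 3, 3, -6]

lemma hSS : S * Sinv = 1 := by
  ext i j
  fin_cases i <;> fin_cases j <;>
    simp [S, Sinv, Matrix.mul_apply, Fin.sum_univ_three, Matrix.one_apply] <;> norm_num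

lemma hSS' : Sinv * S = 1 := by
  ext i j
  fin_cases i <;> fin_cases j <;>
    simp [S, Sinv, Matrix.mul_apply, Fin.sum_univ_three, Matrix.one_apply] <;> norm_num

lemma hSinv : S⁻¹ = Sinv := Matrix.inv_eq_right_inv hSS

lemma hdiag (t : ℝ) : t • Amat = S * Matrix.diagonal ![0, -t, -9*t] * Sinv := by
  ext i j
  fin_cases i <;> fin_cases j <;>
    simp [Amat, S, Sinv, Matrix.mul_apply, Fin.sum_univ_three, Matrix.diagonal_apply,
      Matrix.vecMul_diagonal] <;> ring

lemma hexp (t : ℝ) :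
    exp (t • Amat) = S * Matrix.diagonal ![1, Real.exp (-t), Real.exp (-9*t)] * Sinv := by
  have h : exp ![0, -t, -9*t] = ![1, Real.exp (-t), Real.exp (-9*t)] := by
    rw [Pi.exp_def]; funext i; fin_cases i <;> simp [← Real.exp_eq_exp_ℝ]
  rw [hdiag t, ← hSinv, Matrix.exp_conj S _ ⟨⟨S, Sinv, hSS, hSS'⟩, rfl⟩,
    Matrix.exp_diagonal, h, hSinv]

lemma hexp' (t : ℝ) :
    exp (t • Amat) =
      !![1/3 + Real.exp (-t)/2 + Real.exp (-9*t)/6,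
         1/3 - Real.exp (-t)/2 + Real.exp (-9*t)/6,
         1/3 - Real.exp (-9*t)/3;
         1/3 - Real.exp (-t)/2 + Real.exp (-9*t)/6,
         1/3 + Real.exp (-t)/2 + Real.exp (-9*t)/6,
         1/3 - Real.exp (-9*t)/3;
         1/3 - Real.exp (-9*t)/3,
         1/3 - Real.exp (-9*t)/3,
         1/3 + 2*Real.exp (-9*t)/3] := by
  rw [hexp]
  ext i j
  fin_cases i <;> fin_cases j <;>
    simp [S, Sinv, Matrix.mul_apply, Fin.sum_univ_three, Matrix.diagonal_apply,
      Matrix.vecMul_diagonal] <;> ring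

end
end ExampleMatrix

/-- **Example 2.1** (first claim). The semigroup generated by the matrix `A` below is
eventually strongly positive but not positive. -/
theorem example_matrix_eventually_strongly_positive_not_positive :
    let A : Matrix (Fin 3) (Fin 3) ℝ := !![-2, -1, 3; -1, -2, 3; 3, 3, -6]
    (∃ t₀ : ℝ, 0 ≤ t₀ ∧ ∀ t : ℝ, t₀ ≤ t → ∀ i j, 0 < exp (t • A) i j) ∧
      (∃ t : ℝ, 0 < t ∧ ∃ i j, exp (t • A) i j < 0) := by
  intro A
  have hA : A = ExampleMatrix.Amat := rfl
  constructor
  · refine ⟨1, by norm_num, fun t ht i j => ?_⟩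
    have hapos : 0 < Real.exp (-t) := Real.exp_pos _
    have hbpos : 0 < Real.exp (-(9*t)) := Real.exp_pos _
    have ha : Real.exp (-t) < 2/3 := by
      have h1 : Real.exp (-t) ≤ Real.exp (-1) := Real.exp_le_exp.2 (by linarith)
      have h2 : Real.exp (-1) < 2/3 := by
        rw [show (-1 : ℝ) = -(1:ℝ) from rfl, Real.exp_neg]
        have := Real.exp_one_gt_d9
        rw [inv_lt_comm₀ (by positivity) (by norm_num)]
        linarith
      linarith
    have hb : Real.exp (-(9*t)) < 1 := Real.exp_lt_one_iff.2 (by nlinarith)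
    rw [hA, ExampleMatrix.hexp']
    fin_cases i <;> fin_cases j <;> simp <;> linarith
  · refine ⟨1/10, by norm_num, 0, 1, ?_⟩
    rw [hA, ExampleMatrix.hexp']
    have h1 : (9/10 : ℝ) ≤ Real.exp (-(1/10)) := by
      have := Real.add_one_le_exp (-(1/10) : ℝ); linarith
    have h2 : Real.exp (-9*(1/10)) ≤ 1/(19/10) := by
      have h3 : (19/10 : ℝ) ≤ Real.exp (9/10) := by
        have := Real.add_one_le_exp (9/10 : ℝ); linarith
      rw [show (-9*(1/10) : ℝ) = -(9/10) by norm_num, Real.exp_neg]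
      rw [inv_le_comm₀ (Real.exp_pos _) (by norm_num)]
      calc (1/(19/10) : ℝ)⁻¹ = 19/10 := by norm_num
        _ ≤ Real.exp (9/10) := h3
    simp
    linarith
end

section
/- Let A be the real 3 × 3 matrix with rows (−2, −1, 3), (−1, −2, 3) and (3, 3, −6), and let B be the diagonal 3 × 3 matrix diag(0, 1, 0). Then there exists ε > 0 such that for every s ∈ (4, 4 + ε) the semigroup (e^{t(A+sB)})_{t≥0} is not eventually positive: for every t0 ≥ 0 there exists t ≥ t0 such that the matrix exponential e^{t(A+sB)} has a strictly negative entry. -/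
open NormedSpace

namespace Example21
open Matrix

/-- The relevant characteristic polynomial (negated char poly of `Mat s`). -/
def P (s x : ℝ) : ℝ := x^3 + (10-s)*x^2 + (9-8*s)*x - 3*s

def Mat (s : ℝ) : Matrix (Fin 3) (Fin 3) ℝ := !![-2, -1, 3; -1, s-2, 3; 3, 3, -6]

def u (s l : ℝ) : Fin 3 → ℝ := ![3*(l+1-s), 3*(l+1), (l+2)*(l+2-s)-1]

lemma exists_root {s : ℝ} (hs : 4 < s) (hs2 : s < 9/2) :
    ∃ l, 3 < l ∧ l < s - 1 ∧ P s l = 0 := by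
  have h3 : (3:ℝ) ≤ s - 1 := by linarith
  have hc : ContinuousOn (P s) (Set.Icc 3 (s-1)) := by
    apply Continuous.continuousOn; unfold P; continuity
  have h0 : (0:ℝ) ∈ Set.Ioo (P s 3) (P s (s-1)) := by
    constructor
    · show P s 3 < 0; unfold P; nlinarith
    · show (0:ℝ) < P s (s-1); unfold P; nlinarith
  obtain ⟨l, hl, hpl⟩ := intermediate_value_Ioo h3 hc h0
  exact ⟨l, hl.1, hl.2, hpl⟩

lemma root_unique {s : ℝ} (hs : 4 < s) (hs2 : s < 9/2) {x y : ℝ}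
    (hx : 3 ≤ x) (hy : 3 ≤ y) (hpx : P s x = 0) (hpy : P s y = 0) : x = y := by
  by_contra hne
  have key : P s y - P s x = (y - x) * (x^2 + x*y + y^2 + (10-s)*(x+y) + (9-8*s)) := by
    unfold P; ring
  have hQ : 0 < x^2 + x*y + y^2 + (10-s)*(x+y) + (9-8*s) := by nlinarith
  have h0 : (y - x) * (x^2 + x*y + y^2 + (10-s)*(x+y) + (9-8*s)) = 0 := by
    rw [← key, hpx, hpy]; ring
  rcases mul_eq_zero.mp h0 with h | h
  · exact hne (by linarith)
  · linarith

lemma mulVec_u {s l : ℝ} (hpl : P s l = 0) : (Mat s) *ᵥ (u s l) = l • (u s l) := by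
  have hpl' : l^3 + (10-s)*l^2 + (9-8*s)*l - 3*s = 0 := hpl
  funext i
  fin_cases i
  · simp [Mat, u, Matrix.mulVec, dotProduct, Fin.sum_univ_three]; ring
  · simp [Mat, u, Matrix.mulVec, dotProduct, Fin.sum_univ_three]; ring
  · simp [Mat, u, Matrix.mulVec, dotProduct, Fin.sum_univ_three]
    linear_combination -hpl'

lemma ker_sub {s l : ℝ} (hl3 : 3 < l) {x : Fin 3 → ℝ}
    (hx : (Mat s) *ᵥ x = l • x) : x = (x 1 / (3*(l+1))) • u s l := by
  have h0 := congr_fun hx 0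
  have h1 := congr_fun hx 1
  simp [Mat, Matrix.mulVec, dotProduct, Fin.sum_univ_three] at h0 h1
  have hl1 : l + 1 ≠ 0 := by linarith
  have key : (l+1) * x 0 = (l+1-s) * x 1 := by linear_combination h1 - h0
  funext i
  fin_cases i
  · simp [u]; field_simp
    linear_combination key
  · simp [u]; field_simp
  · simp [u]; field_simp
    linear_combination (l+1) * h0 + (l+2) * key

lemma eig_root {s μr : ℝ} {v : Fin 3 → ℝ} (hv : v ≠ 0) (h : (Mat s) *ᵥ v = μr • v) :
    P s μr = 0 := by
  have h2 : (Mat s - μr • 1) *ᵥ v = 0 := by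
    rw [Matrix.sub_mulVec, Matrix.smul_mulVec, Matrix.one_mulVec, h, sub_self]
  have hdet : (Mat s - μr • 1).det = 0 :=
    (Matrix.exists_mulVec_eq_zero_iff).mp ⟨v, hv, h2⟩
  have hd : (Mat s - μr • 1).det = -(P s μr) := by
    rw [Matrix.det_fin_three]
    simp [Mat, P, Matrix.smul_apply, Matrix.one_apply]
    ring
  rw [hd] at hdet; linarith

lemma isHermitian_Mat (s : ℝ) : (Mat s).IsHermitian := by
  rw [Matrix.IsHermitian]
  ext i j
  fin_cases i <;> fin_cases j <;> simp [Mat, Matrix.conjTranspose_apply]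

lemma main {s : ℝ} (hs : 4 < s) (hs2 : s < 9/2) (t₀ : ℝ) (ht₀ : 0 ≤ t₀) :
    ∃ t, t₀ ≤ t ∧ exp (t • Mat s) 0 1 < 0 := by
  obtain ⟨l, hl3, hls, hpl⟩ := exists_root hs hs2
  have hM : (Mat s).IsHermitian := isHermitian_Mat s
  set U : Matrix (Fin 3) (Fin 3) ℝ :=
    (Matrix.IsHermitian.eigenvectorUnitary hM : Matrix (Fin 3) (Fin 3) ℝ) with hU
  set μ : Fin 3 → ℝ := hM.eigenvalues with hμ
  have hU1 : U * star U = 1 :=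
    Matrix.mem_unitaryGroup_iff.mp (Matrix.IsHermitian.eigenvectorUnitary hM).2
  have hU2 : star U * U = 1 :=
    Matrix.mem_unitaryGroup_iff'.mp (Matrix.IsHermitian.eigenvectorUnitary hM).2
  have hspec : Mat s = U * Matrix.diagonal μ * star U := by
    have h := Matrix.IsHermitian.spectral_theorem hM
    simpa [RCLike.ofReal_real_eq_id, Function.id_comp] using h
  let Uu : (Matrix (Fin 3) (Fin 3) ℝ)ˣ := ⟨U, star U, hU1, hU2⟩
  have hexp : ∀ t : ℝ, exp (t • Mat s)
      = U * Matrix.diagonal (fun k => Real.exp (t * μ k)) * star U := by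
    intro t
    have hdiag : (Matrix.diagonal fun k => t * μ k) = t • Matrix.diagonal μ := by
      rw [← Matrix.diagonal_smul]
      congr 1
    have h1 : t • Mat s
        = (Uu : Matrix (Fin 3) (Fin 3) ℝ) * (Matrix.diagonal fun k => t * μ k)
          * ((Uu⁻¹ : (Matrix (Fin 3) (Fin 3) ℝ)ˣ) : Matrix (Fin 3) (Fin 3) ℝ) := by
      show t • Mat s = U * (Matrix.diagonal fun k => t * μ k) * star U
      rw [hspec, hdiag, Matrix.mul_smul, Matrix.smul_mul]
    have h2 : (exp (fun k => t * μ k) : Fin 3 → ℝ) = fun k => Real.exp (t * μ k) := by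
      funext k; rw [Pi.coe_exp, Real.exp_eq_exp_ℝ]
    rw [h1, Matrix.exp_units_conj Uu, Matrix.exp_diagonal, h2]
    rfl
  have hentry : ∀ t : ℝ, exp (t • Mat s) 0 1
      = ∑ k : Fin 3, Real.exp (t * μ k) * (U 0 k * U 1 k) := by
    intro t
    rw [hexp t, Matrix.mul_apply]
    simp only [Matrix.mul_diagonal, Matrix.star_apply, star_trivial]
    exact Finset.sum_congr rfl (fun k _ => by ring)
  -- columns of U are eigenvectors
  have hcol : ∀ k, (Mat s) *ᵥ (fun i => U i k) = μ k • (fun i => U i k) := by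
    intro k
    have h1 : (fun i => U i k) = ⇑(hM.eigenvectorBasis k) := by
      funext i
      exact Matrix.IsHermitian.eigenvectorUnitary_apply hM i k
    rw [h1, hμ]
    exact Matrix.IsHermitian.mulVec_eigenvectorBasis hM k
  have hnorm : ∀ k, (U 0 k)^2 + (U 1 k)^2 + (U 2 k)^2 = 1 := by
    intro k
    have h := congr_fun (congr_fun hU2 k) k
    simp [Matrix.mul_apply, Matrix.star_apply, Fin.sum_univ_three, Matrix.one_apply] at h
    linear_combination h
  -- u is nonzero
  have hu1pos : 0 < u s l 1 := by simp [u]; linarith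
  have hu0neg : u s l 0 < 0 := by simp [u]; linarith
  have hune : u s l ≠ 0 := by
    intro h
    have := congr_fun h 1
    rw [this] at hu1pos
    simp at hu1pos
  -- find an index k0 with eigenvalue l
  have hMU : Mat s * U = U * Matrix.diagonal μ := by
    rw [hspec, Matrix.mul_assoc, Matrix.mul_assoc, hU2, Matrix.mul_one]
  set c : Fin 3 → ℝ := (star U) *ᵥ (u s l) with hc
  have hUc : U *ᵥ c = u s l := by
    rw [hc, Matrix.mulVec_mulVec, hU1, Matrix.one_mulVec]
  have hDc : Matrix.diagonal μ *ᵥ c = l • c := by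
    have h1 : U *ᵥ (Matrix.diagonal μ *ᵥ c) = U *ᵥ (l • c) := by
      rw [Matrix.mulVec_mulVec, ← hMU, ← Matrix.mulVec_mulVec, hUc, mulVec_u hpl,
        Matrix.mulVec_smul, hUc]
    have h2 := congr_arg (fun w => (star U) *ᵥ w) h1
    simpa [Matrix.mulVec_mulVec, ← Matrix.mul_assoc, hU2, Matrix.one_mulVec] using h2
  have hcne : c ≠ 0 := by
    intro h
    rw [h, Matrix.mulVec_zero] at hUc
    exact hune hUc.symm
  obtain ⟨k0, hk0⟩ : ∃ k, c k ≠ 0 := by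
    by_contra h
    push_neg at h
    exact hcne (funext fun k => h k)
  have hμk0 : μ k0 = l := by
    have h := congr_fun hDc k0
    rw [Matrix.mulVec_diagonal] at h
    have h' : μ k0 * c k0 = l * c k0 := by simpa using h
    exact mul_right_cancel₀ hk0 h'
  -- each column is a nonzero eigenvector, so each eigenvalue is a root of P
  have hvne : ∀ k, (fun i => U i k) ≠ (0 : Fin 3 → ℝ) := by
    intro k h
    have h0 := congr_fun h 0
    have h1 := congr_fun h 1
    have h2 := congr_fun h 2
    simp only [Pi.zero_apply] at h0 h1 h2
    have := hnorm k
    rw [h0, h1, h2] at this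
    norm_num at this
  have hroots : ∀ k, P s (μ k) = 0 := fun k => eig_root (hvne k) (hcol k)
  have heig : ∀ k, μ k = l ∨ μ k < 3 := by
    intro k
    by_cases h : μ k < 3
    · exact Or.inr h
    · push_neg at h
      exact Or.inl (root_unique hs hs2 h hl3.le (hroots k) hpl)
  -- eigenvectors for the eigenvalue l are parallel to u, hence U 0 k * U 1 k ≤ 0
  have hpara : ∀ k, μ k = l → ∃ β : ℝ, (∀ i, U i k = β * u s l i) := by
    intro k hk
    have h := ker_sub hl3 (x := fun i => U i k) (by rw [hcol k, hk])
    exact ⟨U 1 k / (3*(l+1)), fun i => by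
      have := congr_fun h i
      simpa using this⟩
  have wle : ∀ k, μ k = l → U 0 k * U 1 k ≤ 0 := by
    intro k hk
    obtain ⟨β, hβ⟩ := hpara k hk
    rw [hβ 0, hβ 1]
    have hfact : β * u s l 0 * (β * u s l 1) = -(β^2 * ((-(u s l 0)) * u s l 1)) := by ring
    rw [hfact, neg_nonpos]
    exact mul_nonneg (sq_nonneg β) (mul_nonneg (by linarith) hu1pos.le)
  have wub : ∀ k, U 0 k * U 1 k ≤ 1 := by
    intro k
    nlinarith [hnorm k, sq_nonneg (U 0 k - U 1 k), sq_nonneg (U 2 k)]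
  -- the k0 coefficient is strictly negative
  have hwk0 : U 0 k0 * U 1 k0 < 0 := by
    obtain ⟨β, hβ⟩ := hpara k0 hμk0
    have hβne : β ≠ 0 := by
      intro h
      apply hvne k0
      funext i
      rw [hβ i, h, zero_mul]
      rfl
    rw [hβ 0, hβ 1]
    have hfact : β * u s l 0 * (β * u s l 1) = -(β^2 * ((-(u s l 0)) * u s l 1)) := by ring
    have hpos : 0 < β^2 * ((-(u s l 0)) * u s l 1) :=
      mul_pos (by positivity) (mul_pos (by linarith) hu1pos)
    rw [hfact]
    linarith
  set δ : ℝ := -(U 0 k0 * U 1 k0) with hδdef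
  have hδ : 0 < δ := by simp only [hδdef]; linarith
  -- choose the time
  set t : ℝ := max t₀ (Real.log (2/δ) / (l-3) + 1) with htdef
  have ht : t₀ ≤ t := le_max_left _ _
  have ht0 : 0 ≤ t := le_trans ht₀ ht
  have hl3' : (0:ℝ) < l - 3 := by linarith
  refine ⟨t, ht, ?_⟩
  have hlog : Real.log (2/δ) < t * (l-3) := by
    have h1 : Real.log (2/δ) / (l-3) + 1 ≤ t := le_max_right _ _
    have h2 : Real.log (2/δ) / (l-3) < t := by linarith
    calc Real.log (2/δ) = Real.log (2/δ) / (l-3) * (l-3) := by field_simp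
    _ < t * (l-3) := by exact mul_lt_mul_of_pos_right h2 hl3'
  have h2δ : 2/δ < Real.exp (t*(l-3)) := by
    rw [← Real.exp_log (show (0:ℝ) < 2/δ by positivity)]
    exact Real.exp_lt_exp.mpr hlog
  have hkey : 2 * Real.exp (3*t) < δ * Real.exp (t*l) := by
    have hsplit : Real.exp (t*l) = Real.exp (t*(l-3)) * Real.exp (3*t) := by
      rw [← Real.exp_add]; ring_nf
    rw [hsplit]
    have he3 : 0 < Real.exp (3*t) := Real.exp_pos _
    have : 2 < δ * Real.exp (t*(l-3)) := by
      rw [div_lt_iff₀ hδ] at h2δ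
      linarith [mul_comm δ (Real.exp (t*(l-3)))]
    nlinarith
  -- final estimate
  rw [hentry t]
  have hsplit := (Finset.add_sum_erase Finset.univ
    (fun k => Real.exp (t * μ k) * (U 0 k * U 1 k)) (Finset.mem_univ k0)).symm
  rw [hsplit]
  have hbound : ∀ k ∈ Finset.univ.erase k0,
      Real.exp (t * μ k) * (U 0 k * U 1 k) ≤ Real.exp (3*t) := by
    intro k _
    rcases heig k with h | h
    · have h1 := wle k h
      have h2 := Real.exp_pos (t * μ k)
      have h3 := Real.exp_pos (3*t)
      nlinarith
    · have h1 : Real.exp (t * μ k) ≤ Real.exp (3*t) := by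
        apply Real.exp_le_exp.mpr
        calc t * μ k ≤ t * 3 := mul_le_mul_of_nonneg_left h.le ht0
        _ = 3 * t := by ring
      have h2 := Real.exp_pos (t * μ k)
      have h3 := wub k
      nlinarith
  have hsum : ∑ k ∈ Finset.univ.erase k0, Real.exp (t * μ k) * (U 0 k * U 1 k)
      ≤ 2 * Real.exp (3*t) := by
    have hcard : (Finset.univ.erase k0).card = 2 := by
      rw [Finset.card_erase_of_mem (Finset.mem_univ k0)]
      simp
    calc ∑ k ∈ Finset.univ.erase k0, Real.exp (t * μ k) * (U 0 k * U 1 k)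
        ≤ (Finset.univ.erase k0).card • Real.exp (3*t) :=
          Finset.sum_le_card_nsmul _ _ _ hbound
    _ = 2 * Real.exp (3*t) := by rw [hcard]; simp [nsmul_eq_mul]
  have hterm0 : Real.exp (t * μ k0) * (U 0 k0 * U 1 k0) = -(δ * Real.exp (t*l)) := by
    rw [hμk0]
    simp only [hδdef]
    ring
  rw [hterm0]
  linarith

end Example21

/-- **Example 2.1** (main claim). Perturbing `A` by `s B` with `s` slightly larger than `4`
destroys eventual positivity of the semigroup. -/
theorem example_perturbation_destroys_eventual_positivity :
    let A : Matrix (Fin 3) (Fin 3) ℝ := !![-2, -1, 3; -1, -2, 3; 3, 3, -6]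
    let B : Matrix (Fin 3) (Fin 3) ℝ := !![0, 0, 0; 0, 1, 0; 0, 0, 0]
    ∃ ε : ℝ, 0 < ε ∧ ∀ s ∈ Set.Ioo (4 : ℝ) (4 + ε),
      ∀ t₀ : ℝ, 0 ≤ t₀ → ∃ t : ℝ, t₀ ≤ t ∧ ∃ i j, exp (t • (A + s • B)) i j < 0 := by
  show ∃ ε : ℝ, 0 < ε ∧ ∀ s ∈ Set.Ioo (4 : ℝ) (4 + ε),
      ∀ t₀ : ℝ, 0 ≤ t₀ → ∃ t : ℝ, t₀ ≤ t ∧ ∃ i j,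
        exp (t • ((!![-2, -1, 3; -1, -2, 3; 3, 3, -6] : Matrix (Fin 3) (Fin 3) ℝ)
          + s • (!![0, 0, 0; 0, 1, 0; 0, 0, 0] : Matrix (Fin 3) (Fin 3) ℝ))) i j < 0
  refine ⟨1/2, by norm_num, ?_⟩
  intro s hs t₀ ht₀
  have hAB : (!![-2, -1, 3; -1, -2, 3; 3, 3, -6] : Matrix (Fin 3) (Fin 3) ℝ)
      + s • (!![0, 0, 0; 0, 1, 0; 0, 0, 0] : Matrix (Fin 3) (Fin 3) ℝ) = Example21.Mat s := by
    ext i j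
    fin_cases i <;> fin_cases j <;>
      simp [Example21.Mat, Matrix.add_apply, Matrix.smul_apply, Matrix.vecHead, Matrix.vecTail] <;> ring
  obtain ⟨t, ht, hneg⟩ := Example21.main hs.1 (by have := hs.2; linarith) t₀ ht₀
  exact ⟨t, ht, 0, 1, by rwa [hAB]⟩
end

section
/- Let A be the real 3 × 3 matrix with rows (−2, −1, 3), (−1, −2, 3) and (3, 3, −6). For a, s > 0 let C_{a,s} be the 3 × 3 matrix all of whose entries equal a, except that the (2,2)-entry equals s. Then there exist a > 0 and s > 0 such that the semigroup (e^{t(C_{a,s}+A)})_{t≥0} is not eventually positive: for every t0 ≥ 0 there exists t ≥ t0 such that the matrix exponential e^{t(C_{a,s}+A)} has a strictly negative entry. (Note that every matrix C_{a,s} with a, s > 0 has all entries strictly positive and hence generates a strongly positive semigroup.) -/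
open NormedSpace

namespace Ex22Aux

open Matrix

attribute [local instance] Matrix.linftyOpNormedAddCommGroup Matrix.linftyOpNormedRing
  Matrix.linftyOpNormedAlgebra

noncomputable section

/-- The matrix `B = C (1/8) (181/8) + A`. -/
def Bm : Matrix (Fin 3) (Fin 3) ℝ :=
  !![-15/8, -7/8, 25/8; -7/8, 165/8, 25/8; 25/8, 25/8, -47/8]

/-- Eigenvector of `Bm` for the dominant eigenvalue `21`; it has mixed signs. -/
def vv : Fin 3 → ℝ := ![-1, 44, 5]

/-- The component of `e₁` orthogonal to `vv`. -/
def ww : Fin 3 → ℝ := ![22/981, 13/981, -110/981]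

instance : CompleteSpace (Matrix (Fin 3) (Fin 3) ℝ) :=
  (inferInstance : CompleteSpace (Fin 3 → Fin 3 → ℝ))

lemma hBv : Bm *ᵥ vv = (21 : ℝ) • vv := by
  funext i
  fin_cases i <;>
    · simp [Bm, vv, Matrix.mulVec, dotProduct, Fin.sum_univ_three]
      norm_num

lemma hBsymm : Bmᵀ = Bm := by
  ext i j
  fin_cases i <;> fin_cases j <;> simp [Bm]

/-- `M ↦ M *ᵥ u` as a continuous linear map. -/
def mulVecCLM (u : Fin 3 → ℝ) : Matrix (Fin 3) (Fin 3) ℝ →L[ℝ] (Fin 3 → ℝ) :=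
  LinearMap.toContinuousLinearMap
    { toFun := fun M => M *ᵥ u
      map_add' := fun M N => Matrix.add_mulVec M N u
      map_smul' := fun c M => Matrix.smul_mulVec c M u }

@[simp] lemma mulVecCLM_apply (u : Fin 3 → ℝ) (M : Matrix (Fin 3) (Fin 3) ℝ) :
    mulVecCLM u M = M *ᵥ u := rfl

lemma exp_eigen (t : ℝ) : exp (t • Bm) *ᵥ vv = Real.exp (21 * t) • vv := by
  have hpow : ∀ n : ℕ, (t • Bm) ^ n *ᵥ vv = ((21 * t) ^ n) • vv := by
    intro n
    induction n with
    | zero => simp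
    | succ n ih =>
        rw [pow_succ, ← Matrix.mulVec_mulVec, Matrix.smul_mulVec, hBv, Matrix.mulVec_smul,
          Matrix.mulVec_smul, ih, smul_smul, smul_smul]
        have hs : t * 21 * (21 * t) ^ n = (21 * t) ^ (n + 1) := by ring
        rw [hs]
  have hsum : Summable (fun n : ℕ => ((Nat.factorial n : ℝ))⁻¹ • (t • Bm) ^ n) :=
    expSeries_summable' (𝕂 := ℝ) (t • Bm)
  have h1 : exp (t • Bm) *ᵥ vv = mulVecCLM vv (∑' n : ℕ, ((Nat.factorial n : ℝ))⁻¹ • (t • Bm) ^ n) := by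
    rw [exp_eq_tsum ℝ]
    rfl
  rw [h1, (mulVecCLM vv).map_tsum hsum]
  have h2 : ∀ n : ℕ, mulVecCLM vv (((Nat.factorial n : ℝ))⁻¹ • (t • Bm) ^ n)
      = (((Nat.factorial n : ℝ))⁻¹ * (21 * t) ^ n) • vv := by
    intro n
    simp [Matrix.smul_mulVec, hpow, smul_smul]
  rw [tsum_congr h2]
  have hsum2 : Summable (fun n : ℕ => ((Nat.factorial n : ℝ))⁻¹ * (21 * t) ^ n) := by
    simpa [smul_eq_mul] using expSeries_summable' (𝕂 := ℝ) (21 * t)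
  rw [hsum2.tsum_smul_const]
  congr 1
  rw [Real.exp_eq_exp_ℝ, exp_eq_tsum ℝ]
  simp [smul_eq_mul]

lemma exp_symm (t : ℝ) : (exp (t • Bm))ᵀ = exp (t • Bm) := by
  rw [← Matrix.exp_transpose, Matrix.transpose_smul, hBsymm]

/-- The orthogonal-to-`vv` part of the solution. -/
def xx (t : ℝ) : Fin 3 → ℝ := exp (t • Bm) *ᵥ ww

lemma orth (t : ℝ) : -(xx t 0) + 44 * xx t 1 + 5 * xx t 2 = 0 := by
  have h : vv ⬝ᵥ (exp (t • Bm) *ᵥ ww) = 0 := by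
    rw [Matrix.dotProduct_mulVec, ← Matrix.mulVec_transpose, exp_symm, exp_eigen]
    have : vv ⬝ᵥ ww = 0 := by
      simp [vv, ww, dotProduct, Fin.sum_univ_three]
      norm_num
    rw [smul_dotProduct, this, smul_zero]
  simpa [vv, xx, dotProduct, Fin.sum_univ_three] using h
  
lemma xx_hasDeriv (t : ℝ) : HasDerivAt xx (Bm *ᵥ xx t) t := by
  have h := hasDerivAt_exp_smul_const' (𝕂 := ℝ) Bm t
  have h2 := ((mulVecCLM ww).hasFDerivAt.comp_hasDerivAt t h)
  exact h2.congr_deriv (by show (Bm * exp (t • Bm)) *ᵥ ww = Bm *ᵥ xx t; rw [← Matrix.mulVec_mulVec]; rfl)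

/-- Squared norm of `xx`. -/
def gg (t : ℝ) : ℝ := (xx t 0)^2 + (xx t 1)^2 + (xx t 2)^2

lemma gg_hasDeriv (t : ℝ) :
    HasDerivAt gg (2 * (xx t 0 * (Bm *ᵥ xx t) 0 + xx t 1 * (Bm *ᵥ xx t) 1
      + xx t 2 * (Bm *ᵥ xx t) 2)) t := by
  have h := xx_hasDeriv t
  have h0 := (hasDerivAt_pi.1 h 0)
  have h1 := (hasDerivAt_pi.1 h 1)
  have h2 := (hasDerivAt_pi.1 h 2)
  have := ((h0.mul h0).add (h1.mul h1)).add (h2.mul h2)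
  convert this using 1
  · rfl
  · rfl
  · funext u; simp only [gg, Pi.add_apply, Pi.mul_apply]; ring
  · ring

lemma gg_antitone : Antitone gg := by
  apply antitone_of_hasDerivAt_nonpos (f' := fun t => 2 * (xx t 0 * (Bm *ᵥ xx t) 0
    + xx t 1 * (Bm *ᵥ xx t) 1 + xx t 2 * (Bm *ᵥ xx t) 2)) gg_hasDeriv
  intro t
  have horth := orth t
  set p := xx t 0 with hp
  set q := xx t 1 with hq
  set r := xx t 2 with hr
  have hb : ∀ i, (Bm *ᵥ xx t) i = Bm i 0 * p + Bm i 1 * q + Bm i 2 * r := by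
    intro i
    simp [Matrix.mulVec, dotProduct, Fin.sum_univ_three, hp, hq, hr]
  have hp0 : p = 44 * q + 5 * r := by linarith
  simp only [Pi.le_def]  -- no-op safeguard
  show 2 * (p * (Bm *ᵥ xx t) 0 + q * (Bm *ᵥ xx t) 1 + r * (Bm *ᵥ xx t) 2) ≤ 0
  rw [hb 0, hb 1, hb 2, hp0]
  have e0 : Bm 0 0 = -15/8 := rfl
  have e1 : Bm 0 1 = -7/8 := rfl
  have e2 : Bm 0 2 = 25/8 := rfl
  have e3 : Bm 1 0 = -7/8 := rfl
  have e4 : Bm 1 1 = 165/8 := rfl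
  have e5 : Bm 1 2 = 25/8 := rfl
  have e6 : Bm 2 0 = 25/8 := rfl
  have e7 : Bm 2 1 = 25/8 := rfl
  have e8 : Bm 2 2 = -47/8 := rfl
  rw [e0, e1, e2, e3, e4, e5, e6, e7, e8]
  nlinarith [sq_nonneg (29491 * q + 2210 * r), sq_nonneg r, sq_nonneg q]

lemma gg_zero : gg 0 = 13/981 := by
  have h : xx 0 = ww := by
    simp [xx, Matrix.one_mulVec]
  rw [gg, h]
  norm_num [ww, Matrix.cons_val_two, Matrix.tail_cons, Matrix.head_cons]

lemma xx_le_one {t : ℝ} (ht : 0 ≤ t) : xx t 0 ≤ 1 := by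
  have h1 : gg t ≤ gg 0 := gg_antitone ht
  have h2 : (xx t 0)^2 ≤ gg t := by
    have := sq_nonneg (xx t 1)
    have := sq_nonneg (xx t 2)
    simp only [gg]; nlinarith
  rw [gg_zero] at h1
  nlinarith

lemma entry_neg {t : ℝ} (ht : 3 ≤ t) : exp (t • Bm) 0 1 < 0 := by
  have ht0 : (0:ℝ) ≤ t := by linarith
  have hsplit : (fun j => if j = 1 then (1:ℝ) else 0) = (22/981 : ℝ) • vv + ww := by
    funext i
    fin_cases i <;> norm_num [vv, ww, Fin.ext_iff]
  have hentry : exp (t • Bm) 0 1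
      = (exp (t • Bm) *ᵥ ((22/981 : ℝ) • vv + ww)) 0 := by
    rw [← hsplit]
    simp [Matrix.mulVec, dotProduct, Fin.sum_univ_three]
  rw [hentry, Matrix.mulVec_add, Matrix.mulVec_smul, exp_eigen]
  have hv0 : vv 0 = -1 := rfl
  have hval : ((22/981 : ℝ) • (Real.exp (21 * t) • vv) + exp (t • Bm) *ᵥ ww) 0
      = (22/981 : ℝ) * Real.exp (21 * t) * (-1) + xx t 0 := by
    simp only [Pi.add_apply, Pi.smul_apply, hv0, smul_eq_mul, xx]
    ring
  rw [hval]
  have hx1 : xx t 0 ≤ 1 := xx_le_one ht0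
  have hexp : (64 : ℝ) ≤ Real.exp (21 * t) := by
    have h := Real.add_one_le_exp (21 * t)
    nlinarith
  nlinarith

end

end Ex22Aux

open Ex22Aux in
/-- **Example 2.2.** There are `a, s > 0` such that the (entrywise strictly positive)
matrix `C a s` — all entries equal to `a` except the `(2,2)`-entry which equals `s` —
satisfies: the semigroup generated by `C a s + A` is not eventually positive, where `A`
is the eventually strongly positive generator of Example 2.1. -/
theorem example_positive_plus_eventually_positive_not_eventually_positive :
    let A : Matrix (Fin 3) (Fin 3) ℝ := !![-2, -1, 3; -1, -2, 3; 3, 3, -6]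
    let C : ℝ → ℝ → Matrix (Fin 3) (Fin 3) ℝ :=
      fun a s => Matrix.of fun i j => if i = 1 ∧ j = 1 then s else a
    ∃ a : ℝ, 0 < a ∧ ∃ s : ℝ, 0 < s ∧
      (∀ i j, 0 < C a s i j) ∧
      ∀ t₀ : ℝ, 0 ≤ t₀ → ∃ t : ℝ, t₀ ≤ t ∧ ∃ i j, exp (t • (C a s + A)) i j < 0 := by
  intro A C
  refine ⟨1/8, by norm_num, 181/8, by norm_num, ?_, ?_⟩
  · intro i j
    show (0:ℝ) < if i = 1 ∧ j = 1 then (181/8 : ℝ) else 1/8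
    split <;> norm_num
  · have hCA : C (1/8) (181/8) + A = Bm := by
      ext i j
      show (if i = 1 ∧ j = 1 then (181/8 : ℝ) else 1/8) + A i j = Bm i j
      fin_cases i <;> fin_cases j <;> · simp [A, Bm]; norm_num
    intro t₀ ht₀
    refine ⟨max t₀ 3, le_max_left _ _, 0, 1, ?_⟩
    rw [hCA]
    exact entry_neg (le_max_right t₀ 3)
end

section
/- Let A be the real 3 × 3 matrix (1/√2)·M where M has rows (0, 0, 1), (0, 0, 1) and (1, 1, 0). Then for every t > 0 all entries of the matrix exponential e^{tA} are strictly positive, i.e., the semigroup (e^{tA})_{t≥0} is strongly positive. -/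
open NormedSpace

/-- **Example 4.7** (first claim). The semigroup generated by
`A = (1/√2) · !![0,0,1; 0,0,1; 1,1,0]` is strongly positive. -/
theorem example_strongly_positive_semigroup :
    let A : Matrix (Fin 3) (Fin 3) ℝ :=
      (Real.sqrt 2)⁻¹ • !![0, 0, 1; 0, 0, 1; 1, 1, 0]
    ∀ t : ℝ, 0 < t → ∀ i j, 0 < exp (t • A) i j := by
  intro A t ht i j
  have h2 : Real.sqrt 2 * Real.sqrt 2 = 2 := Real.mul_self_sqrt (by norm_num)
  have hcpos : (0:ℝ) < (Real.sqrt 2)⁻¹ := by positivity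
  have hc1 : (Real.sqrt 2)⁻¹ ≤ 1 := by
    rw [inv_le_one_iff₀]
    right
    nlinarith [Real.sqrt_nonneg 2]
  -- A squared
  have hA2 : A ^ 2 = !![1/2, 1/2, 0; 1/2, 1/2, 0; 0, 0, 1] := by
    have : (Real.sqrt 2)⁻¹ * (Real.sqrt 2)⁻¹ = 1/2 := by
      rw [← mul_inv]; rw [h2]; norm_num
    ext i j
    fin_cases i <;> fin_cases j <;>
      simp [A, pow_two, Matrix.mul_apply, Fin.sum_univ_three, this] <;> linarith [this]
  have hA3 : A ^ 3 = A := by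
    have h3 : A ^ 3 = A ^ 2 * A := by rw [pow_succ]
    rw [h3, hA2]
    ext i j
    fin_cases i <;> fin_cases j <;>
      simp [A, Matrix.mul_apply, Fin.sum_univ_three] <;> ring
  -- powers cycle
  have hcycle : ∀ n : ℕ, A ^ (n + 1) = A ∨ A ^ (n + 1) = A ^ 2 := by
    intro n
    induction n with
    | zero => left; simp
    | succ m ih =>
      rcases ih with h | h
      · right; rw [pow_succ, h, ← pow_two]
      · left; rw [pow_succ, h, ← pow_succ, hA3]
  have hA_nonneg : ∀ i j, 0 ≤ A i j := by
    intro i j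
    fin_cases i <;> fin_cases j <;> simp [A] <;> positivity
  have hA_le : ∀ i j, A i j ≤ 1 := by
    intro i j
    fin_cases i <;> fin_cases j <;> simp [A] <;> linarith
  have hpow_nonneg : ∀ n (i j : Fin 3), 0 ≤ (A ^ n) i j := by
    intro n i j
    cases n with
    | zero => simp [Matrix.one_apply]; split <;> norm_num
    | succ m =>
      rcases hcycle m with h | h <;> rw [h]
      · exact hA_nonneg i j
      · rw [hA2]; fin_cases i <;> fin_cases j <;> norm_num
  have hpow_le : ∀ n (i j : Fin 3), (A ^ n) i j ≤ 1 := by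
    intro n i j
    cases n with
    | zero => simp [Matrix.one_apply]; split <;> norm_num
    | succ m =>
      rcases hcycle m with h | h <;> rw [h]
      · exact hA_le i j
      · rw [hA2]; fin_cases i <;> fin_cases j <;> norm_num
  -- the matrix series
  set f : ℕ → Matrix (Fin 3) (Fin 3) ℝ := fun n => ((n.factorial : ℝ))⁻¹ • (t • A) ^ n with hf
  have hentry : ∀ n (i j : Fin 3), f n i j = ((n.factorial : ℝ))⁻¹ * (t ^ n * (A ^ n) i j) := by
    intro n i j
    simp [hf, smul_pow, Matrix.smul_apply]
  have hsum_entry : ∀ i j : Fin 3, Summable fun n => f n i j := by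
    intro i j
    apply Summable.of_nonneg_of_le (g := fun n => f n i j)
      (f := fun n => t ^ n / (n.factorial : ℝ))
    · intro n
      rw [hentry]
      have := hpow_nonneg n i j
      positivity
    · intro n
      rw [hentry, div_eq_mul_inv]
      have h1 := hpow_le n i j
      have h2' := hpow_nonneg n i j
      have h3 : (0:ℝ) ≤ t ^ n := by positivity
      have h4 : (0:ℝ) ≤ ((n.factorial : ℝ))⁻¹ := by positivity
      calc ((n.factorial : ℝ))⁻¹ * (t ^ n * (A ^ n) i j)
          ≤ ((n.factorial : ℝ))⁻¹ * (t ^ n * 1) :=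
            mul_le_mul_of_nonneg_left (mul_le_mul_of_nonneg_left h1 h3) h4
        _ = t ^ n * ((n.factorial : ℝ))⁻¹ := by ring
    · exact Real.summable_pow_div_factorial t
  have hsum : Summable f := by
    refine Pi.summable.2 ?_
    intro i'
    rw [Pi.summable]
    intro j'
    exact hsum_entry i' j'
  have hexp0 : exp (t • A) = ∑' n, f n := by rw [exp_eq_tsum (𝕂 := ℝ)]
  have hexp : exp (t • A) i j = ∑' n, f n i j := by
    rw [hexp0]
    exact (congrFun (tsum_apply hsum) j).trans (tsum_apply ((Pi.summable).1 hsum i))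
  rw [hexp]
  -- positivity: pick witness depending on (i,j)
  have key : ∀ n : ℕ, 0 < (A ^ n) i j → 0 < ∑' n, f n i j := by
    intro n hn
    apply Summable.tsum_pos (hsum_entry i j) (fun m => by rw [hentry]; have := hpow_nonneg m i j; positivity) n
    rw [hentry]
    have h1 : (0:ℝ) < ((n.factorial : ℝ))⁻¹ := by positivity
    have h2 : (0:ℝ) < t ^ n := by positivity
    positivity
  fin_cases i <;> fin_cases j
  · exact key 0 (by norm_num [Matrix.one_apply])
  · exact key 2 (by rw [hA2]; norm_num)
  · exact key 1 (by simp [A]; try positivity)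
  · exact key 2 (by rw [hA2]; norm_num)
  · exact key 0 (by norm_num [Matrix.one_apply])
  · exact key 1 (by simp [A]; try positivity)
  · exact key 1 (by simp [A]; try positivity)
  · exact key 1 (by simp [A]; try positivity)
  · exact key 0 (by norm_num [Matrix.one_apply])
end

section
/- Let A be the real 3 × 3 matrix (1/√2)·M where M has rows (0, 0, 1), (0, 0, 1) and (1, 1, 0), and let B be the real 3 × 3 matrix (1/√2)·N where N has rows (0, −1, 0), (−1, 0, 0) and (0, 0, 0). Then: (a) for every ε > 0 there exists t > 0 such that the matrix exponential e^{t(A+εB)} has a strictly negative entry (so A + εB never generates a positive semigroup); and (b) there exists ε0 > 0 such that for every ε ∈ (0, ε0) the semigroup (e^{t(A+εB)})_{t≥0} is eventually strongly positive, i.e., there exists t0 ≥ 0 such that all entries of e^{t(A+εB)} are strictly positive for all t ≥ t0. -/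
open NormedSpace
open Nat Filter Topology

set_option maxHeartbeats 2000000

noncomputable def Pone (a : ℝ) : Matrix (Fin 3) (Fin 3) ℝ :=
  (2 + a ^ 2)⁻¹ • !![1, 1, a; 1, 1, a; a, a, a ^ 2]
noncomputable def Pthree : Matrix (Fin 3) (Fin 3) ℝ :=
  (2 : ℝ)⁻¹ • !![1, -1, 0; -1, 1, 0; 0, 0, 0]

lemma Pone_mul_Pone (a : ℝ) : Pone a * Pone a = Pone a := by
  have h : (2 + a ^ 2) ≠ 0 := by positivity
  ext i j
  fin_cases i <;> fin_cases j <;>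
    simp [Pone, Matrix.mul_apply, Fin.sum_univ_three, Matrix.vecHead, Matrix.vecTail] <;>
    field_simp <;> (first | tauto | (left; ring) | ring)

lemma Pthree_mul_Pthree : Pthree * Pthree = Pthree := by
  ext i j
  fin_cases i <;> fin_cases j <;>
    simp [Pthree, Matrix.mul_apply, Fin.sum_univ_three, Matrix.vecHead, Matrix.vecTail] <;>
    norm_num

lemma Pone_mul_Pthree (a : ℝ) : Pone a * Pthree = 0 := by
  ext i j
  fin_cases i <;> fin_cases j <;>
    simp [Pone, Pthree, Matrix.mul_apply, Fin.sum_univ_three, Matrix.vecHead, Matrix.vecTail] <;>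
    ring_nf

lemma Pthree_mul_Pone (a : ℝ) : Pthree * Pone a = 0 := by
  ext i j
  fin_cases i <;> fin_cases j <;>
    simp [Pone, Pthree, Matrix.mul_apply, Fin.sum_univ_three, Matrix.vecHead, Matrix.vecTail] <;>
    ring_nf

lemma Pone_mul_Pone' {a b : ℝ} (hab : a * b = -2) : Pone a * Pone b = 0 := by
  have ha0 : a ≠ 0 := by rintro rfl; simp at hab
  have hb : b = -2 / a := by rw [eq_div_iff ha0]; linarith [hab]
  subst hb
  have h1 : (2 + a ^ 2) ≠ 0 := by positivity
  have h2 : (2 + (-2/a) ^ 2) ≠ 0 := by positivity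
  ext i j
  fin_cases i <;> fin_cases j <;>
    simp [Pone, Matrix.mul_apply, Fin.sum_univ_three, Matrix.vecHead, Matrix.vecTail] <;>
    field_simp <;> (first | tauto | (left; ring) | ring)

lemma Pone_sum {a b : ℝ} (hab : a * b = -2) : Pone a + Pone b + Pthree = 1 := by
  have ha0 : a ≠ 0 := by rintro rfl; simp at hab
  have hb : b = -2 / a := by rw [eq_div_iff ha0]; linarith [hab]
  subst hb
  have h1 : (2 + a ^ 2) ≠ 0 := by positivity
  have h2 : (2 + (-2/a) ^ 2) ≠ 0 := by positivity
  ext i j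
  fin_cases i <;> fin_cases j <;>
    simp [Pone, Pthree, Matrix.add_apply, Matrix.smul_apply, Matrix.one_apply,
      Matrix.vecHead, Matrix.vecTail] <;>
    field_simp <;> (first | tauto | (left; ring) | ring)

set_option maxHeartbeats 1000000 in
lemma M_decomp {a b : ℝ} (hab : a * b = -2) :
    (Real.sqrt 2)⁻¹ • !![0, -(a+b), 1; -(a+b), 0, 1; 1, 1, 0] =
      (-b / Real.sqrt 2) • Pone a + (-a / Real.sqrt 2) • Pone b
        + ((a + b) / Real.sqrt 2) • Pthree := by
  have ha0 : a ≠ 0 := by rintro rfl; simp at hab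
  have hb : b = -2 / a := by rw [eq_div_iff ha0]; linarith [hab]
  have hr : Real.sqrt 2 ≠ 0 := by positivity
  subst hb
  have h1 : (2 + a ^ 2) ≠ 0 := by positivity
  have h2 : (2 + (-2/a) ^ 2) ≠ 0 := by positivity
  ext i j
  fin_cases i <;> fin_cases j <;>
    simp [Pone, Pthree, Matrix.add_apply, Matrix.smul_apply,
        Matrix.vecHead, Matrix.vecTail] <;>
    field_simp <;> (first | tauto | (left; ring) | ring)

theorem exp_smul_idem' {𝔸 : Type*} [NormedRing 𝔸] [NormedAlgebra ℝ 𝔸] [CompleteSpace 𝔸]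
    (P : 𝔸) (hP : P * P = P) (c : ℝ) :
    exp (c • P) = 1 + (Real.exp c - 1) • P := by
  have hPn : ∀ n : ℕ, P ^ (n + 1) = P := by
    intro n
    induction n with
    | zero => simp
    | succ k ih => rw [pow_succ, ih, hP]
  have hsum : Summable (fun n : ℕ => ((n !)⁻¹ : ℝ) • (c • P) ^ n) :=
    expSeries_summable' (𝕂 := ℝ) (c • P)
  have key : ∀ n : ℕ, ((n + 1)!⁻¹ : ℝ) • (c • P) ^ (n + 1) = (c ^ (n + 1) / (n + 1)!) • P := by
    intro n
    rw [smul_pow, hPn, smul_smul]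
    congr 1
    field_simp
  have hs2 : Summable (fun n : ℕ => c ^ (n + 1) / ((n + 1)! : ℝ)) :=
    (Real.summable_pow_div_factorial c).comp_injective (add_left_injective 1)
  have hrexp : Real.exp c = ∑' n : ℕ, c ^ n / (n ! : ℝ) := by
    rw [Real.exp_eq_exp_ℝ, exp_eq_tsum_div]
  have hrexp2 : Real.exp c = 1 + ∑' n : ℕ, c ^ (n + 1) / ((n + 1)! : ℝ) := by
    rw [hrexp, Summable.tsum_eq_zero_add (Real.summable_pow_div_factorial c)]
    norm_num
  calc exp (c • P) = ∑' n : ℕ, ((n !)⁻¹ : ℝ) • (c • P) ^ n := by rw [exp_eq_tsum ℝ]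
    _ = ((0)!⁻¹ : ℝ) • (c • P) ^ 0 + ∑' n : ℕ, ((n + 1)!⁻¹ : ℝ) • (c • P) ^ (n + 1) :=
        Summable.tsum_eq_zero_add hsum
    _ = 1 + ∑' n : ℕ, (c ^ (n + 1) / ((n + 1)! : ℝ)) • P := by
        rw [tsum_congr key]; norm_num
    _ = 1 + (∑' n : ℕ, c ^ (n + 1) / ((n + 1)! : ℝ)) • P := by rw [Summable.tsum_smul_const hs2]
    _ = 1 + (Real.exp c - 1) • P := by rw [hrexp2, add_sub_cancel_left]

theorem matrix_exp_smul_idem (P : Matrix (Fin 3) (Fin 3) ℝ) (hP : P * P = P) (c : ℝ) :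
    exp (c • P) = 1 + (Real.exp c - 1) • P := by
  letI : SeminormedRing (Matrix (Fin 3) (Fin 3) ℝ) := Matrix.linftyOpSemiNormedRing
  letI : NormedRing (Matrix (Fin 3) (Fin 3) ℝ) := Matrix.linftyOpNormedRing
  letI : NormedAlgebra ℝ (Matrix (Fin 3) (Fin 3) ℝ) := Matrix.linftyOpNormedAlgebra
  exact exp_smul_idem' P hP c

lemma commute_smul_zero {P Q : Matrix (Fin 3) (Fin 3) ℝ} (h1 : P * Q = 0) (h2 : Q * P = 0)
    (x y : ℝ) : Commute (x • P) (y • Q) := by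
  show _ * _ = _ * _
  simp [smul_mul_assoc, mul_smul_comm, h1, h2]

theorem exp_formula {a b : ℝ} (hab : a * b = -2) (t : ℝ) :
    exp (t • ((Real.sqrt 2)⁻¹ •
        !![0, -(a+b), 1; -(a+b), 0, 1; 1, 1, 0] : Matrix (Fin 3) (Fin 3) ℝ)) =
      Real.exp (t * (-b / Real.sqrt 2)) • Pone a + Real.exp (t * (-a / Real.sqrt 2)) • Pone b
        + Real.exp (t * ((a + b) / Real.sqrt 2)) • Pthree := by
  have hba : b * a = -2 := by rw [mul_comm]; exact hab
  have h12 := Pone_mul_Pone' hab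
  have h21 := Pone_mul_Pone' hba
  have h13 := Pone_mul_Pthree a
  have h31 := Pthree_mul_Pone a
  have h23 := Pone_mul_Pthree b
  have h32 := Pthree_mul_Pone b
  have hsmul : t • ((Real.sqrt 2)⁻¹ •
        !![0, -(a+b), 1; -(a+b), 0, 1; 1, 1, 0] : Matrix (Fin 3) (Fin 3) ℝ) =
      (t * (-b / Real.sqrt 2)) • Pone a +
        ((t * (-a / Real.sqrt 2)) • Pone b + (t * ((a + b) / Real.sqrt 2)) • Pthree) := by
    rw [M_decomp hab]; module
  rw [hsmul]
  rw [Matrix.exp_add_of_commute _ _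
      ((commute_smul_zero h12 h21 _ _).add_right (commute_smul_zero h13 h31 _ _))]
  rw [Matrix.exp_add_of_commute _ _ (commute_smul_zero h23 h32 _ _)]
  rw [matrix_exp_smul_idem _ (Pone_mul_Pone a), matrix_exp_smul_idem _ (Pone_mul_Pone b),
    matrix_exp_smul_idem _ Pthree_mul_Pthree]
  have e1 : (1 + (Real.exp (t * (-a / Real.sqrt 2)) - 1) • Pone b) *
      (1 + (Real.exp (t * ((a + b) / Real.sqrt 2)) - 1) • Pthree) =
      1 + (Real.exp (t * (-a / Real.sqrt 2)) - 1) • Pone b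
        + (Real.exp (t * ((a + b) / Real.sqrt 2)) - 1) • Pthree := by
    simp only [mul_add, add_mul, mul_one, one_mul, smul_mul_assoc, mul_smul_comm, h23,
      smul_zero, add_zero]
  rw [e1]
  have e2 : (1 + (Real.exp (t * (-b / Real.sqrt 2)) - 1) • Pone a) *
      (1 + (Real.exp (t * (-a / Real.sqrt 2)) - 1) • Pone b
        + (Real.exp (t * ((a + b) / Real.sqrt 2)) - 1) • Pthree) =
      1 + (Real.exp (t * (-b / Real.sqrt 2)) - 1) • Pone a
        + (Real.exp (t * (-a / Real.sqrt 2)) - 1) • Pone b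
        + (Real.exp (t * ((a + b) / Real.sqrt 2)) - 1) • Pthree := by
    simp only [mul_add, add_mul, mul_one, one_mul, smul_mul_assoc, mul_smul_comm, h12, h13,
      smul_zero, add_zero]
    try abel
  rw [e2, show (1 : Matrix (Fin 3) (Fin 3) ℝ) = Pone a + Pone b + Pthree from
    (Pone_sum hab).symm]
  module
lemma key_id {a b : ℝ} (hab : a * b = -2) :
    b * (2 + a ^ 2)⁻¹ + a * (2 + b ^ 2)⁻¹ = (a + b) / 2 := by
  have ha0 : a ≠ 0 := by rintro rfl; simp at hab
  have hb : b = -2 / a := by rw [eq_div_iff ha0]; linarith [hab]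
  subst hb
  have h1 : (2 + a ^ 2) ≠ 0 := by positivity
  have h2 : (2 + (-2/a) ^ 2) ≠ 0 := by positivity
  field_simp
  ring

lemma key_sum {a b : ℝ} (hab : a * b = -2) :
    (2 + a ^ 2)⁻¹ + (2 + b ^ 2)⁻¹ = 1 / 2 := by
  have ha0 : a ≠ 0 := by rintro rfl; simp at hab
  have hb : b = -2 / a := by rw [eq_div_iff ha0]; linarith [hab]
  subst hb
  have h1 : (2 + a ^ 2) ≠ 0 := by positivity
  have h2 : (2 + (-2/a) ^ 2) ≠ 0 := by positivity
  field_simp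
  ring

lemma entry_pos {x y z c1 c2 c3 : ℝ} (h1 : 1/6 ≤ c1) (h2 : -1 ≤ c2) (h3 : -(1/2) ≤ c3)
    (hxz : Real.exp z * 15 ≤ Real.exp x) (hyz : Real.exp y ≤ Real.exp z) :
    0 < Real.exp x * c1 + Real.exp y * c2 + Real.exp z * c3 := by
  have e1 : Real.exp x * (1/6) ≤ Real.exp x * c1 :=
    mul_le_mul_of_nonneg_left h1 (Real.exp_pos x).le
  have e2 : Real.exp y * (-1) ≤ Real.exp y * c2 :=
    mul_le_mul_of_nonneg_left h2 (Real.exp_pos y).le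
  have e3 : Real.exp z * (-(1/2)) ≤ Real.exp z * c3 :=
    mul_le_mul_of_nonneg_left h3 (Real.exp_pos z).le
  nlinarith [Real.exp_pos z, Real.exp_pos y]
open Filter Topology

lemma exists_pos_neg {f : ℝ → ℝ} {d : ℝ} (hf : HasDerivAt f d 0) (h0 : f 0 = 0) (hd : d < 0) :
    ∃ t : ℝ, 0 < t ∧ f t < 0 := by
  have h1 : Tendsto (slope f 0) (𝓝[>] 0) (𝓝 d) :=
    (hasDerivAt_iff_tendsto_slope.mp hf).mono_left
      (nhdsWithin_mono 0 fun x hx => ne_of_gt hx)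
  have h2 : ∀ᶠ t in 𝓝[>] (0:ℝ), slope f 0 t < 0 := h1.eventually_lt_const hd
  have h3 : ∀ᶠ t in 𝓝[>] (0:ℝ), 0 < t := eventually_mem_nhdsWithin
  obtain ⟨t, hst, ht⟩ := (h2.and h3).exists
  refine ⟨t, ht, ?_⟩
  rw [slope_def_field, h0, sub_zero, sub_zero] at hst
  have := mul_neg_of_neg_of_pos hst ht
  have ht' : t ≠ 0 := ne_of_gt ht
  calc f t = f t / t * t := by field_simp
    _ < 0 := this


/-- **Example 4.7** (remaining claims). For the strongly positive generator `A` and the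
perturbation `B` below: (a) `A + ε B` never generates a positive semigroup for `ε > 0`;
(b) for all sufficiently small `ε > 0` the semigroup generated by `A + ε B` is eventually
strongly positive. -/
theorem example_perturbation_of_strongly_positive_semigroup :
    let A : Matrix (Fin 3) (Fin 3) ℝ :=
      (Real.sqrt 2)⁻¹ • !![0, 0, 1; 0, 0, 1; 1, 1, 0]
    let B : Matrix (Fin 3) (Fin 3) ℝ :=
      (Real.sqrt 2)⁻¹ • !![0, -1, 0; -1, 0, 0; 0, 0, 0]
    (∀ ε : ℝ, 0 < ε → ∃ t : ℝ, 0 < t ∧ ∃ i j, exp (t • (A + ε • B)) i j < 0) ∧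
      (∃ ε₀ : ℝ, 0 < ε₀ ∧ ∀ ε ∈ Set.Ioo (0 : ℝ) ε₀,
        ∃ t₀ : ℝ, 0 ≤ t₀ ∧ ∀ t : ℝ, t₀ ≤ t → ∀ i j, 0 < exp (t • (A + ε • B)) i j) := by
  intro A B
  have hA : A = (Real.sqrt 2)⁻¹ • !![0, 0, 1; 0, 0, 1; 1, 1, 0] := rfl
  have hB : B = (Real.sqrt 2)⁻¹ • !![0, -1, 0; -1, 0, 0; 0, 0, 0] := rfl
  have hsqrt2 : (0:ℝ) < Real.sqrt 2 := by positivity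
  have hMeq : ∀ ε : ℝ, A + ε • B =
      (Real.sqrt 2)⁻¹ • !![0, -ε, 1; -ε, 0, 1; 1, 1, 0] := by
    intro ε
    rw [hA, hB]
    ext i j
    fin_cases i <;> fin_cases j <;>
      simp [Matrix.add_apply, Matrix.smul_apply, Matrix.vecHead, Matrix.vecTail] <;> ring
  constructor
  · -- part (a)
    intro ε hε
    set s := Real.sqrt (ε^2 + 8) with hs_def
    have hs0 : 0 ≤ s := Real.sqrt_nonneg _
    have hs : s^2 = ε^2 + 8 := Real.sq_sqrt (by positivity)
    set a := (ε + s)/2 with ha_def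
    set b := (ε - s)/2 with hb_def
    have hab : a * b = -2 := by
      have h : a * b = (ε^2 - s^2)/4 := by rw [ha_def, hb_def]; ring
      rw [h, hs]; ring
    have hεab : a + b = ε := by rw [ha_def, hb_def]; ring
    have hM : A + ε • B = (Real.sqrt 2)⁻¹ • !![0, -(a+b), 1; -(a+b), 0, 1; 1, 1, 0] := by
      rw [hεab]; exact hMeq ε
    have h2a : (0:ℝ) < 2 + a^2 := by positivity
    have h2b : (0:ℝ) < 2 + b^2 := by positivity
    set f : ℝ → ℝ := fun u => Real.exp (u * (-b / Real.sqrt 2)) * (2 + a^2)⁻¹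
      + Real.exp (u * (-a / Real.sqrt 2)) * (2 + b^2)⁻¹
      - Real.exp (u * ((a + b) / Real.sqrt 2)) / 2 with hf_def
    set d : ℝ := -b / Real.sqrt 2 * (2 + a^2)⁻¹ + -a / Real.sqrt 2 * (2 + b^2)⁻¹
      - ((a + b) / Real.sqrt 2) / 2 with hd_def
    have hf0 : f 0 = 0 := by
      rw [hf_def]
      simp only [zero_mul, Real.exp_zero, one_mul]
      linarith [key_sum hab]
    have hder : HasDerivAt f d 0 := by
      have h1 : HasDerivAt (fun u : ℝ => Real.exp (u * (-b / Real.sqrt 2)))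
          (-b / Real.sqrt 2) 0 := by
        simpa using ((hasDerivAt_id (0:ℝ)).mul_const (-b / Real.sqrt 2)).exp
      have h2 : HasDerivAt (fun u : ℝ => Real.exp (u * (-a / Real.sqrt 2)))
          (-a / Real.sqrt 2) 0 := by
        simpa using ((hasDerivAt_id (0:ℝ)).mul_const (-a / Real.sqrt 2)).exp
      have h3 : HasDerivAt (fun u : ℝ => Real.exp (u * ((a + b) / Real.sqrt 2)))
          ((a + b) / Real.sqrt 2) 0 := by
        simpa using ((hasDerivAt_id (0:ℝ)).mul_const ((a + b) / Real.sqrt 2)).exp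
      exact ((h1.mul_const _).add (h2.mul_const _)).sub (h3.div_const 2)
    have hdneg : d < 0 := by
      have expand : d = (-(b * (2 + a^2)⁻¹ + a * (2 + b^2)⁻¹) - (a + b)/2) / Real.sqrt 2 := by
        rw [hd_def]; ring
      have hd2 : d = -(a + b) / Real.sqrt 2 := by
        rw [expand, key_id hab]; ring
      rw [hd2, hεab]
      exact div_neg_of_neg_of_pos (by linarith) hsqrt2
    obtain ⟨t, ht, hneg⟩ := exists_pos_neg hder hf0 hdneg
    refine ⟨t, ht, 0, 1, ?_⟩
    have hentry : exp (t • (A + ε • B)) 0 1 = f t := by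
      rw [hM, exp_formula hab t, hf_def]
      simp [Pone, Pthree, Matrix.add_apply, Matrix.smul_apply]
      ring
    rw [hentry]
    exact hneg
  · -- part (b)
    refine ⟨1, one_pos, ?_⟩
    rintro ε ⟨hε, hε1⟩
    set s := Real.sqrt (ε^2 + 8) with hs_def
    have hs0 : 0 ≤ s := Real.sqrt_nonneg _
    have hs : s^2 = ε^2 + 8 := Real.sq_sqrt (by positivity)
    set a := (ε + s)/2 with ha_def
    set b := (ε - s)/2 with hb_def
    have hab : a * b = -2 := by
      have h : a * b = (ε^2 - s^2)/4 := by rw [ha_def, hb_def]; ring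
      rw [h, hs]; ring
    have hεab : a + b = ε := by rw [ha_def, hb_def]; ring
    have hM : A + ε • B = (Real.sqrt 2)⁻¹ • !![0, -(a+b), 1; -(a+b), 0, 1; 1, 1, 0] := by
      rw [hεab]; exact hMeq ε
    have hsgt : 2 < s := by nlinarith [hs, hs0, hε]
    have hslt : s < 3 := by nlinarith [hs, hs0, hε1, hε]
    have ha1 : 1 < a := by rw [ha_def]; linarith
    have ha2 : a < 2 := by rw [ha_def]; linarith
    have hbneg : b < 0 := by rw [hb_def]; linarith
    have hbgt : -2 < b := by rw [hb_def]; linarith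
    have hs3ε : 3*ε < s := by nlinarith [hs, hs0, hε, hε1]
    have hδ' : 0 < (-b - (a + b)) / Real.sqrt 2 := by
      apply div_pos _ hsqrt2
      rw [ha_def, hb_def]; linarith
    refine ⟨Real.log 15 / ((-b - (a + b)) / Real.sqrt 2),
      div_nonneg (Real.log_nonneg (by norm_num)) hδ'.le, ?_⟩
    intro t htt i j
    have ht0 : 0 ≤ t :=
      le_trans (div_nonneg (Real.log_nonneg (by norm_num)) hδ'.le) htt
    have hlog : Real.log 15 ≤ t * ((-b - (a + b)) / Real.sqrt 2) := (div_le_iff₀ hδ').mp htt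
    have h15 : Real.exp (t * ((a + b) / Real.sqrt 2)) * 15
        ≤ Real.exp (t * (-b / Real.sqrt 2)) := by
      have e : Real.exp (t * (-b / Real.sqrt 2)) = Real.exp (t * ((a + b) / Real.sqrt 2))
          * Real.exp (t * ((-b - (a + b)) / Real.sqrt 2)) := by
        rw [← Real.exp_add]; congr 1; ring
      rw [e]
      have h15' : (15:ℝ) ≤ Real.exp (t * ((-b - (a + b)) / Real.sqrt 2)) := by
        calc (15:ℝ) = Real.exp (Real.log 15) := (Real.exp_log (by norm_num)).symm
          _ ≤ _ := Real.exp_le_exp.mpr hlog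
      exact mul_le_mul_of_nonneg_left h15' (Real.exp_pos _).le
    have hyz : Real.exp (t * (-a / Real.sqrt 2))
        ≤ Real.exp (t * ((a + b) / Real.sqrt 2)) := by
      apply Real.exp_le_exp.mpr
      apply mul_le_mul_of_nonneg_left _ ht0
      exact (div_le_div_iff_of_pos_right hsqrt2).mpr (by linarith)
    rw [hM, exp_formula hab t]
    simp only [Matrix.add_apply, Matrix.smul_apply, smul_eq_mul]
    refine entry_pos ?_ ?_ ?_ h15 hyz
    · have hu : (2 + a^2) * (2 + a^2)⁻¹ = 1 := mul_inv_cancel₀ (by positivity)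
      have hv : (0:ℝ) < (2 + a^2)⁻¹ := by positivity
      fin_cases i <;> fin_cases j <;> simp [Pone] <;> nlinarith [hu, hv, ha1, ha2]
    · have hu : (2 + b^2) * (2 + b^2)⁻¹ = 1 := mul_inv_cancel₀ (by positivity)
      have hv : (0:ℝ) < (2 + b^2)⁻¹ := by positivity
      fin_cases i <;> fin_cases j <;> simp [Pone] <;> nlinarith [hu, hv, hbgt, hbneg]
    · fin_cases i <;> fin_cases j <;> simp [Pthree, Matrix.vecHead, Matrix.vecTail] <;> norm_num
end

section
/- Let E be a complex Banach space, let A be a bounded linear operator on E, let φ be a continuous linear functional on E, and let v ∈ E be a nonzero vector with A·v = λ0·v for some λ0 ∈ ℂ. Denote by φ ⊗ v the bounded rank-one operator z ↦ φ(z)·v. If λ ∈ ℂ lies in the resolvent set of A, then λ lies in the resolvent set of A + φ ⊗ v if and only if λ − λ0 ≠ φ(v); and in this case R(λ, A + φ ⊗ v) = R(λ,A) + ((λ − λ0) − φ(v))⁻¹ · (φ ⊗ v) ∘ R(λ, A), where R(λ,A) = (λI − A)⁻¹. -/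
/-- **Proposition A.2(a)** (bounded-operator form). If `v ≠ 0` is an eigenvector of `A`
for the eigenvalue `λ₀` and `λ ∈ ρ(A)`, then `λ ∈ ρ(A + φ ⊗ v)` iff
`λ - λ₀ ≠ φ(v)`, and in that case
`R(λ, A + φ ⊗ v) = R(λ,A) + ((λ - λ₀) - φ(v))⁻¹ (φ ⊗ v) R(λ,A)`. -/
theorem resolvent_rank_one_perturbation_eigenvector
    {E : Type*} [NormedAddCommGroup E] [NormedSpace ℂ E] [CompleteSpace E]
    (A : E →L[ℂ] E) (φ : E →L[ℂ] ℂ) (v : E) (hv : v ≠ 0) (l₀ : ℂ) (hAv : A v = l₀ • v)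
    (l : ℂ) (hl : l ∈ resolventSet ℂ A) :
    (l ∈ resolventSet ℂ (A + φ.smulRight v) ↔ l - l₀ ≠ φ v) ∧
      (l - l₀ ≠ φ v →
        resolvent (A + φ.smulRight v) l =
          resolvent A l + ((l - l₀) - φ v)⁻¹ • (φ.smulRight v ∘L resolvent A l)) := by
  set T : E →L[ℂ] E := algebraMap ℂ (E →L[ℂ] E) l - A with hT
  have hU : IsUnit T := hl
  set R : E →L[ℂ] E := resolvent A l with hRdef
  have hTR : ∀ z, T (R z) = z := by
    intro z
    have h := Ring.mul_inverse_cancel _ hU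
    calc T (R z) = ((T * Ring.inverse T) : E →L[ℂ] E) z := rfl
    _ = z := by rw [h]; rfl
  have hRT : ∀ z, R (T z) = z := by
    intro z
    have h := Ring.inverse_mul_cancel _ hU
    calc R (T z) = ((Ring.inverse T * T) : E →L[ℂ] E) z := rfl
    _ = z := by rw [h]; rfl
  have hTapp : ∀ z, T z = l • z - A z := by
    intro z; simp [hT, Algebra.algebraMap_eq_smul_one]
  have hTv : T v = (l - l₀) • v := by
    rw [hTapp, hAv, sub_smul]
  have hll₀ : l - l₀ ≠ 0 := by
    intro h
    have h1 : T v = 0 := by rw [hTv, h, zero_smul]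
    have h2 := hRT v
    rw [h1, map_zero] at h2
    exact hv h2.symm
  have hRv : R v = (l - l₀)⁻¹ • v := by
    have h := hRT v
    rw [hTv, map_smul] at h
    rw [eq_inv_smul_iff₀ hll₀, h]
  set S : E →L[ℂ] E := algebraMap ℂ (E →L[ℂ] E) l - (A + φ.smulRight v) with hS
  have hSapp : ∀ z, S z = T z - φ z • v := by
    intro z
    simp [hS, hT, ContinuousLinearMap.sub_apply, ContinuousLinearMap.add_apply,
      ContinuousLinearMap.smulRight_apply]
    abel
  -- the candidate inverse
  set c : ℂ := (l - l₀) - φ v with hcdef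
  set B : E →L[ℂ] E := R + c⁻¹ • (φ.smulRight v ∘L R) with hB
  have hBapp : ∀ w, B w = R w + (c⁻¹ * φ (R w)) • v := by
    intro w
    simp [hB, ContinuousLinearMap.add_apply, ContinuousLinearMap.smul_apply,
      ContinuousLinearMap.comp_apply, ContinuousLinearMap.smulRight_apply, mul_smul]
  have main : l - l₀ ≠ φ v → (S * B = 1 ∧ B * S = 1) := by
    intro hc
    have hc0 : c ≠ 0 := sub_ne_zero.mpr hc
    constructor
    · ext z
      show S (B z) = z
      rw [hSapp, hBapp, map_add, map_smul, hTv, hTR, map_add, map_smul, smul_eq_mul]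
      have step : z + (c⁻¹ * φ (R z)) • (l - l₀) • v -
          (φ (R z) + c⁻¹ * φ (R z) * φ v) • v = z +
          ((c⁻¹ * φ (R z)) * (l - l₀) - (φ (R z) + c⁻¹ * φ (R z) * φ v)) • v := by
        rw [smul_smul, sub_smul]
        abel
      rw [step]
      have hz : (c⁻¹ * φ (R z)) * (l - l₀) - (φ (R z) + c⁻¹ * φ (R z) * φ v) = 0 := by
        field_simp
        ring
      rw [hz, zero_smul, add_zero]
    · ext z
      show B (S z) = z
      rw [hSapp, map_sub, hBapp, hBapp, hRT, map_smul, hRv]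
      simp only [map_smul, smul_eq_mul, smul_smul]
      have step : ∀ a b d : ℂ, z + a • v - (b • v + d • v) = z + (a - (b + d)) • v := by
        intro a b d
        rw [sub_smul, add_smul]
        abel
      rw [step]
      have hz : c⁻¹ * φ z - (φ z * (l - l₀)⁻¹ + c⁻¹ * (φ z * (l - l₀)⁻¹ * φ v)) = 0 := by
        field_simp
        ring
      rw [hz, zero_smul, add_zero]
  constructor
  · constructor
    · intro hmem heq
      have hU2 : IsUnit S := hmem
      have hSv : S v = 0 := by
        rw [hSapp, hTv, ← heq, sub_self]
      have h := Ring.inverse_mul_cancel _ hU2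
      have h2 : (Ring.inverse S : E →L[ℂ] E) (S v) = v := by
        calc (Ring.inverse S : E →L[ℂ] E) (S v)
            = ((Ring.inverse S * S) : E →L[ℂ] E) v := rfl
          _ = v := by rw [h]; rfl
      rw [hSv, map_zero] at h2
      exact hv h2.symm
    · intro hc
      obtain ⟨key1, key2⟩ := main hc
      exact ⟨⟨S, B, key1, key2⟩, rfl⟩
  · intro hc
    obtain ⟨key1, key2⟩ := main hc
    have : resolvent (A + φ.smulRight v) l = Ring.inverse S := rfl
    rw [this]
    have hu : Ring.inverse ((⟨S, B, key1, key2⟩ : (E →L[ℂ] E)ˣ) : E →L[ℂ] E) =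
        ((⟨S, B, key1, key2⟩ : (E →L[ℂ] E)ˣ)⁻¹ : (E →L[ℂ] E)ˣ) := Ring.inverse_unit _
    exact hu
end

section
/- Let E be a complex Banach space, let A be a bounded linear operator on E, let φ be a continuous linear functional on E, and let v ∈ E be a nonzero vector with A·v = λ0·v for some λ0 ∈ ℂ. Denote by φ ⊗ v the bounded rank-one operator z ↦ φ(z)·v, and set μ := φ(v) + λ0. If μ does not belong to the spectrum of A (i.e., μI − A is invertible), then for every t ≥ 0 one has e^{t(A + φ ⊗ v)} = e^{tA} + (φ ⊗ v) ∘ (e^{tμ}·I − e^{tA}) ∘ R(μ, A), where e^{tS} denotes the operator exponential of tS and R(μ,A) = (μI − A)⁻¹. -/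
open NormedSpace

/-- **Proposition A.2(b)** (bounded-generator form). If `v ≠ 0` is an eigenvector of `A`
for the eigenvalue `λ₀` and `μ := φ(v) + λ₀` is not in the spectrum of `A`, then for all
`t ≥ 0`:
`e^{t(A + φ ⊗ v)} = e^{tA} + (φ ⊗ v) ∘ (e^{tμ} I - e^{tA}) ∘ R(μ, A)`. -/
theorem semigroup_rank_one_perturbation_eigenvector
    {E : Type*} [NormedAddCommGroup E] [NormedSpace ℂ E] [CompleteSpace E]
    (A : E →L[ℂ] E) (φ : E →L[ℂ] ℂ) (v : E) (hv : v ≠ 0) (l₀ : ℂ) (hAv : A v = l₀ • v)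
    (hμ : φ v + l₀ ∉ spectrum ℂ A) :
    ∀ t : ℝ, 0 ≤ t →
      exp ((t : ℂ) • (A + φ.smulRight v)) =
        exp ((t : ℂ) • A) +
          φ.smulRight v ∘L
            (Complex.exp ((t : ℂ) * (φ v + l₀)) • (1 : E →L[ℂ] E) -
              exp ((t : ℂ) • A)) ∘L
            resolvent A (φ v + l₀) := by
  intro t ht
  set B : E →L[ℂ] E := φ.smulRight v with hB
  set μ : ℂ := φ v + l₀ with hμdef
  set R : E →L[ℂ] E := resolvent A μ with hRdef
  set X : E →L[ℂ] E := A + B with hX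
  -- basic algebraic facts
  have hAB : A * B = l₀ • B := by
    ext z
    simp only [hB, ContinuousLinearMap.mul_apply, ContinuousLinearMap.smulRight_apply,
      ContinuousLinearMap.smul_apply, map_smul, hAv, smul_smul]
    rw [mul_comm]
  have hBB : B * B = (φ v) • B := by
    ext z
    simp only [hB, ContinuousLinearMap.mul_apply, ContinuousLinearMap.smulRight_apply,
      ContinuousLinearMap.smul_apply, map_smul, smul_eq_mul, smul_smul]
    rw [mul_comm]
  have hunit : IsUnit (algebraMap ℂ (E →L[ℂ] E) μ - A) := by
    simpa [spectrum.mem_iff, not_not] using hμ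
  have hMR : (algebraMap ℂ (E →L[ℂ] E) μ - A) * R = 1 := by
    rw [hRdef, resolvent]
    exact Ring.mul_inverse_cancel _ hunit
  have halg : algebraMap ℂ (E →L[ℂ] E) μ = μ • 1 := Algebra.algebraMap_eq_smul_one μ
  -- the candidate solution
  set F : ℂ → (E →L[ℂ] E) := fun s =>
    exp (s • A) + B * (Complex.exp (s * μ) • (1 : E →L[ℂ] E) - exp (s • A)) * R with hF
  have hcommA : ∀ s : ℂ, A * exp (s • A) = exp (s • A) * A := fun s =>
    (((Commute.refl A).smul_right s).exp_right)
  -- F satisfies the ODE F' = X * F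
  have hF' : ∀ s : ℂ, HasDerivAt F (X * F s) s := by
    intro s
    set Ea : E →L[ℂ] E := exp (s • A) with hEa
    set c : ℂ := Complex.exp (s * μ) with hc'
    set Y : E →L[ℂ] E := c • (1 : E →L[ℂ] E) - Ea with hY
    have he : HasDerivAt (fun u : ℂ => exp (u • A)) (Ea * A) s :=
      hasDerivAt_exp_smul_const A s
    have hcd : HasDerivAt (fun u : ℂ => Complex.exp (u * μ)) (c * μ) s := by
      simpa [hc'] using ((hasDerivAt_id s).mul_const μ).cexp
    have h1 : HasDerivAt (fun u : ℂ => Complex.exp (u * μ) • (1 : E →L[ℂ] E) - exp (u • A))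
        ((c * μ) • (1 : E →L[ℂ] E) - Ea * A) s :=
      (hcd.smul_const _).sub he
    have h2 : HasDerivAt F
        (Ea * A + B * ((c * μ) • (1 : E →L[ℂ] E) - Ea * A) * R) s :=
      he.add ((h1.const_mul B).mul_const R)
    convert h2 using 1
    -- algebraic identity: X * F s = Ea * A + B * ((c*μ) • 1 - Ea * A) * R
    have hEaMR : Ea * ((μ • 1 - A) * R) = Ea := by
      rw [← halg, hMR, mul_one]
    have expand : X * F s = A * Ea + ((A * B) * (Y * R) + (B * B) * (Y * R) + B * Ea) := by
      rw [hX, hF]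
      simp only [add_mul, mul_add, mul_assoc]
      abel
    have mid : (A * B) * (Y * R) + (B * B) * (Y * R) = B * (μ • Y) * R := by
      rw [hAB, hBB, smul_mul_assoc, smul_mul_assoc, ← add_smul, mul_smul_comm,
        smul_mul_assoc, mul_assoc, hμdef, add_comm (φ v) l₀]
    have last : B * Ea = B * ((μ • Ea - Ea * A) * R) := by
      conv_lhs => rw [← hEaMR]
      rw [← mul_assoc Ea, mul_sub, mul_smul_comm, mul_one]
    rw [expand, mid, last, hcommA s]
    have hsum : B * (μ • Y) * R + B * ((μ • Ea - Ea * A) * R)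
        = B * ((c * μ) • (1 : E →L[ℂ] E) - Ea * A) * R := by
      rw [mul_assoc B (μ • Y) R, ← mul_add, ← add_mul, ← mul_assoc]
      congr 2
      rw [hY, smul_sub, smul_smul, mul_comm μ c]
      abel
    rw [hsum]
  -- the function exp(u • (-X)) * F u is constant
  have hG : ∀ s : ℂ, HasDerivAt (fun u : ℂ => exp (u • (-X)) * F u) 0 s := by
    intro s
    have he : HasDerivAt (fun u : ℂ => exp (u • (-X))) (exp (s • (-X)) * (-X)) s :=
      hasDerivAt_exp_smul_const (-X) s
    have h := he.mul (hF' s)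
    refine h.congr_deriv ?_
    rw [mul_assoc]
    noncomm_ring
  have hdiff : Differentiable ℂ (fun u : ℂ => exp (u • (-X)) * F u) :=
    fun s => (hG s).differentiableAt
  have hconst : exp ((t : ℂ) • (-X)) * F (t : ℂ) = exp ((0 : ℂ) • (-X)) * F 0 :=
    is_const_of_deriv_eq_zero hdiff (fun s => (hG s).deriv) _ _
  have hF0 : F 0 = 1 := by
    simp [hF, exp_zero]
  have hG0 : exp ((0 : ℂ) • (-X)) * F 0 = 1 := by
    rw [hF0, zero_smul, exp_zero, one_mul]
  have hFt : F (t : ℂ) = exp ((t : ℂ) • X) := by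
    have hinv : exp ((t : ℂ) • X) * exp ((t : ℂ) • (-X)) = 1 := by
      let _ : NormedAlgebra ℚ (E →L[ℂ] E) := .restrictScalars ℚ ℂ (E →L[ℂ] E)
      rw [← exp_add_of_commute]
      · simp
      · simpa using ((Commute.refl ((t : ℂ) • X)).neg_right)
    calc F (t : ℂ) = 1 * F (t : ℂ) := (one_mul _).symm
      _ = exp ((t : ℂ) • X) * (exp ((t : ℂ) • (-X)) * F (t : ℂ)) := by
          rw [← mul_assoc, hinv]
      _ = exp ((t : ℂ) • X) * 1 := by rw [hconst, hG0]
      _ = exp ((t : ℂ) • X) := mul_one _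
  -- conclude
  rw [hX] at hFt
  rw [← hFt, hF]
  simp only [ContinuousLinearMap.mul_def, ContinuousLinearMap.comp_assoc]
end
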